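/- arXiv:math/9810169 — 4 statements merged into one kernel-verified Lean document; each statement's English description precedes it below -/
import Mathlib

section
/- Let ε > 0 and let g : (0,∞) → ℂ satisfy condition (A_ε). Then for every s with −ε < Re s < 1+ε the integral ĝ(s) = ∫₀^∞ g(u) u^{s−1} du converges absolutely, the function s ↦ ĝ(s) is holomorphic on the open strip −ε < Re s < 1+ε, and there is a constant C such that |ĝ(s)| ≤ C/|Im s| for every s in this strip with Im s ≠ 0. -/
open Complex MeasureTheory Set Filter Topology

section MellinBVAux

lemma mellinBV_measurable_ofReal_cpow (r : ℂ) : Measurable fun x : ℝ => (x : ℂ) ^ r := by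
  have h : (fun x : ℝ => (x:ℂ)^r)
      = fun x : ℝ => if (x:ℂ) = 0 then (if r = 0 then 1 else 0)
        else Complex.exp (Complex.log x * r) := by
    funext x; rw [Complex.cpow_def]
  rw [h]
  have hset : {x : ℝ | (x:ℂ) = 0} = {0} := by ext x; simp
  apply Measurable.ite
  · rw [hset]; exact measurableSet_singleton 0
  · exact measurable_const
  · exact Complex.measurable_exp.comp
      ((Complex.measurable_log.comp Complex.continuous_ofReal.measurable).mul_const r)

lemma mellinBV_key_mono (S : Set ℝ) (hSm : MeasurableSet S) (hS0 : S ⊆ Ioi 0)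
    (φ : ℝ → ℂ) (hφm : Measurable φ) (hφi : IntegrableOn φ S)
    (p : ℝ → ℝ) (hpm : Monotone p) (hp0 : ∀ u ∈ S, 0 ≤ p u)
    (B : ℝ) (hB : 0 ≤ B) (hpB : ∀ u ∈ S, p u ≤ B)
    (D : ℝ) (hD : 0 ≤ D) (hDt : ∀ a : ℝ, ‖∫ u in S ∩ Ioi a, φ u‖ ≤ D) :
    ‖∫ u in S, p u • φ u‖ ≤ B * D := by
  set ν : Measure ℝ := volume.restrict (Ioo 0 B) with hν
  haveI : IsFiniteMeasure ν := ⟨by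
    rw [hν, Measure.restrict_apply_univ]; exact measure_Ioo_lt_top⟩
  set F : ℝ × ℝ → ℂ := fun q => if q.2 < p q.1 then φ q.1 else 0 with hF
  have hFmeas : Measurable F := by
    apply Measurable.ite
    · exact measurableSet_lt measurable_snd (hpm.measurable.comp measurable_fst)
    · exact hφm.comp measurable_fst
    · exact measurable_const
  have hFe : ∀ u : ℝ, (fun t => F (u, t)) = (Iio (p u)).indicator (fun _ => φ u) := by
    intro u; funext t
    simp only [hF, Set.indicator_apply, mem_Iio]
  have hνB : ∀ x : ℝ, (ν (Iio x)).toReal ≤ B := by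
    intro x
    have h1 : ν (Iio x) ≤ ν univ := measure_mono (subset_univ _)
    have h2 : (ν univ).toReal = B := by
      rw [hν, Measure.restrict_apply_univ, Real.volume_Ioo, sub_zero,
        ENNReal.toReal_ofReal hB]
    calc (ν (Iio x)).toReal ≤ (ν univ).toReal :=
          ENNReal.toReal_mono (measure_ne_top _ _) h1
      _ = B := h2
  have hInt : Integrable F ((volume.restrict S).prod ν) := by
    rw [integrable_prod_iff hFmeas.aestronglyMeasurable]
    constructor
    · refine Eventually.of_forall fun u => ?_
      rw [hFe u]
      exact (integrable_const (φ u)).indicator measurableSet_Iio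
    · have hnorm : ∀ u, (∫ t, ‖F (u, t)‖ ∂ν) ≤ B * ‖φ u‖ := by
        intro u
        have h1 : (fun t => ‖F (u, t)‖) = (Iio (p u)).indicator (fun _ => ‖φ u‖) := by
          funext t
          by_cases h : t < p u <;> simp [hF, Set.indicator_apply, mem_Iio, h]
        rw [h1, integral_indicator_const _ measurableSet_Iio, smul_eq_mul]
        exact mul_le_mul_of_nonneg_right (hνB _) (norm_nonneg _)
      refine Integrable.mono' (hφi.norm.const_mul B)
        hFmeas.norm.aestronglyMeasurable.integral_prod_right' ?_
      refine Eventually.of_forall fun u => ?_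
      rw [Real.norm_eq_abs, _root_.abs_of_nonneg (integral_nonneg fun t => norm_nonneg _)]
      exact hnorm u
  have hswap := integral_integral_swap (f := fun u t => F (u, t))
    (μ := volume.restrict S) (ν := ν) hInt
  have hL : (∫ u in S, ∫ t, F (u, t) ∂ν) = ∫ u in S, p u • φ u := by
    refine setIntegral_congr_fun hSm fun u hu => ?_
    rw [hFe u, integral_indicator_const _ measurableSet_Iio]
    congr 1
    have hset : Iio (p u) ∩ Ioo 0 B = Ioo 0 (p u) := by
      ext t
      constructor
      · rintro ⟨h1, h2, _⟩; exact ⟨h2, h1⟩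
      · rintro ⟨h1, h2⟩; exact ⟨h2, h1, lt_of_lt_of_le h2 (hpB u hu)⟩
    rw [hν, measureReal_def, Measure.restrict_apply measurableSet_Iio, hset, Real.volume_Ioo, sub_zero,
      ENNReal.toReal_ofReal (hp0 u hu)]
  have hbound : ∀ t : ℝ, ‖∫ u in S, F (u, t)‖ ≤ D := by
    intro t
    have hA : MeasurableSet {u : ℝ | t < p u} := measurableSet_lt measurable_const hpm.measurable
    have h1 : (∫ u in S, F (u, t)) = ∫ u in S ∩ {u : ℝ | t < p u}, φ u := by
      rw [← setIntegral_indicator hA]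
      refine setIntegral_congr_fun hSm fun u _ => ?_
      simp only [hF, Set.indicator_apply, mem_setOf_eq]
    rw [h1]
    by_cases hne : (S ∩ {u : ℝ | t < p u}).Nonempty
    · set a₀ := sInf (S ∩ {u : ℝ | t < p u}) with ha₀
      have hbdd : BddBelow (S ∩ {u : ℝ | t < p u}) :=
        ⟨0, fun x hx => le_of_lt (hS0 hx.1)⟩
      have hsub1 : S ∩ Ioi a₀ ⊆ S ∩ {u : ℝ | t < p u} := by
        rintro u ⟨huS, hua⟩
        obtain ⟨v, hv, hvu⟩ := exists_lt_of_csInf_lt hne hua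
        exact ⟨huS, lt_of_lt_of_le hv.2 (hpm hvu.le)⟩
      have hsub2 : (S ∩ {u : ℝ | t < p u}) \ (S ∩ Ioi a₀) ⊆ {a₀} := by
        rintro u ⟨hu, hu'⟩
        have h2 : a₀ ≤ u := csInf_le hbdd hu
        have h3 : ¬ (a₀ < u) := fun h => hu' ⟨hu.1, h⟩
        simpa using le_antisymm (not_lt.mp h3) h2
      have hae : (S ∩ {u : ℝ | t < p u} : Set ℝ) =ᵐ[volume] (S ∩ Ioi a₀ : Set ℝ) := by
        rw [MeasureTheory.ae_eq_set]
        constructor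
        · exact measure_mono_null hsub2 (measure_singleton a₀)
        · rw [diff_eq_empty.mpr hsub1]; exact measure_empty
      rw [setIntegral_congr_set hae]
      exact hDt a₀
    · rw [not_nonempty_iff_eq_empty] at hne
      rw [hne, setIntegral_empty]
      simpa using hD
  calc ‖∫ u in S, p u • φ u‖ = ‖∫ t, (∫ u in S, F (u, t)) ∂ν‖ := by rw [← hL, hswap]
    _ ≤ D * (volume (Ioo 0 B)).toReal := by
        refine norm_setIntegral_le_of_norm_le_const ?_ fun t _ => hbound t
        exact measure_Ioo_lt_top
    _ ≤ D * B := by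
        refine mul_le_mul_of_nonneg_left ?_ hD
        rw [Real.volume_Ioo, sub_zero, ENNReal.toReal_ofReal hB]
    _ = B * D := mul_comm _ _

lemma mellinBV_key_mono_tail (S : Set ℝ) (hSm : MeasurableSet S) (hS0 : S ⊆ Ioi 0)
    (φ : ℝ → ℂ) (hφm : Measurable φ) (hφi : IntegrableOn φ S)
    (p : ℝ → ℝ) (hpm : Monotone p) (hp0 : ∀ u ∈ S, 0 ≤ p u)
    (B : ℝ) (hB : 0 ≤ B) (hpB : ∀ u ∈ S, p u ≤ B)
    (D : ℝ) (hD : 0 ≤ D) (hDt : ∀ a : ℝ, ‖∫ u in S ∩ Ioi a, φ u‖ ≤ D) :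
    ∀ a : ℝ, ‖∫ u in S ∩ Ioi a, p u • φ u‖ ≤ B * D := by
  intro a
  refine mellinBV_key_mono (S ∩ Ioi a) (hSm.inter measurableSet_Ioi)
    (fun u hu => hS0 hu.1) φ hφm (hφi.mono_set inter_subset_left)
    p hpm (fun u hu => hp0 u hu.1) B hB (fun u hu => hpB u hu.1) D hD (fun c => ?_)
  rw [inter_assoc, Ioi_inter_Ioi]
  exact hDt _

lemma mellinBV_real_bv_decomp (f : ℝ → ℝ) (hf : BoundedVariationOn f (Ioi 0)) (M : ℝ)
    (hM : ∀ u ∈ Ioi (0:ℝ), |f u| ≤ M) :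
    ∃ (p q : ℝ → ℝ) (B : ℝ), Monotone p ∧ Monotone q ∧ 0 ≤ B ∧
      (∀ u, 0 ≤ p u ∧ p u ≤ B) ∧ (∀ u, 0 ≤ q u ∧ q u ≤ B) ∧
      ∀ u ∈ Ioi (0:ℝ), f u = p u - q u := by
  have h1 : (1:ℝ) ∈ Ioi (0:ℝ) := mem_Ioi.2 one_pos
  have hM0 : 0 ≤ M := le_trans (abs_nonneg _) (hM 1 h1)
  set V : ℝ := (eVariationOn f (Ioi 0)).toReal with hV
  have hV0 : 0 ≤ V := ENNReal.toReal_nonneg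
  set v : ℝ → ℝ := fun u => variationOnFromTo f (Ioi 0) 1 u with hvdef
  have hvmono : MonotoneOn v (Ioi 0) :=
    variationOnFromTo.monotoneOn hf.locallyBoundedVariationOn h1
  have hwmono : MonotoneOn (v - f) (Ioi 0) :=
    variationOnFromTo.sub_self_monotoneOn hf.locallyBoundedVariationOn h1
  have key : ∀ a b : ℝ, (eVariationOn f (Ioi 0 ∩ Icc a b)).toReal ≤ V :=
    fun a b => ENNReal.toReal_mono hf (eVariationOn.mono f inter_subset_left)
  have hvbound : ∀ u ∈ Ioi (0:ℝ), |v u| ≤ V := by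
    intro u _
    rcases le_total (1:ℝ) u with h | h
    · show |variationOnFromTo f (Ioi 0) 1 u| ≤ V
      rw [variationOnFromTo.eq_of_le f (Ioi 0) h,
        _root_.abs_of_nonneg ENNReal.toReal_nonneg]
      exact key _ _
    · show |variationOnFromTo f (Ioi 0) 1 u| ≤ V
      rw [variationOnFromTo.eq_of_ge f (Ioi 0) h, abs_neg,
        _root_.abs_of_nonneg ENNReal.toReal_nonneg]
      exact key _ _
  refine ⟨fun u => if 0 < u then v u + (V + M) else 0,
          fun u => if 0 < u then v u - f u + (V + M) else 0, 2*V + 2*M, ?_, ?_,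
          by positivity, ?_, ?_, ?_⟩
  · intro a b hab
    by_cases ha : 0 < a
    · have hb : 0 < b := lt_of_lt_of_le ha hab
      simp only [if_pos ha, if_pos hb]
      have := hvmono (mem_Ioi.2 ha) (mem_Ioi.2 hb) hab
      linarith
    · by_cases hb : 0 < b
      · simp only [if_neg ha, if_pos hb]
        have := abs_le.1 (hvbound b (mem_Ioi.2 hb))
        linarith [this.1]
      · simp [if_neg ha, if_neg hb]
  · intro a b hab
    by_cases ha : 0 < a
    · have hb : 0 < b := lt_of_lt_of_le ha hab
      simp only [if_pos ha, if_pos hb]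
      have h2 := hwmono (mem_Ioi.2 ha) (mem_Ioi.2 hb) hab
      simp only [Pi.sub_apply] at h2
      linarith
    · by_cases hb : 0 < b
      · simp only [if_neg ha, if_pos hb]
        have h2' := abs_le.1 (hvbound b (mem_Ioi.2 hb))
        have h3' := abs_le.1 (hM b (mem_Ioi.2 hb))
        linarith [h2'.1, h3'.2]
      · simp [if_neg ha, if_neg hb]
  · intro u
    by_cases hu : 0 < u
    · simp only [if_pos hu]
      have h2' := abs_le.1 (hvbound u (mem_Ioi.2 hu))
      constructor <;> linarith [h2'.1, h2'.2]
    · simp only [if_neg hu]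
      constructor <;> linarith
  · intro u
    by_cases hu : 0 < u
    · simp only [if_pos hu]
      have h2' := abs_le.1 (hvbound u (mem_Ioi.2 hu))
      have h3' := abs_le.1 (hM u (mem_Ioi.2 hu))
      constructor <;> linarith [h2'.1, h2'.2, h3'.1, h3'.2]
    · simp only [if_neg hu]
      constructor <;> linarith
  · intro u hu
    simp only [if_pos (mem_Ioi.1 hu)]
    ring

lemma mellinBV_base_est_low (z : ℂ) (hz0 : 0 < z.re) (hz1 : z.im ≠ 0) (a : ℝ) :
    ‖∫ u in Ioc 0 1 ∩ Ioi a, (u:ℂ) ^ (z - 1)‖ ≤ 2 / |z.im| := by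
  have ht0 : 0 < |z.im| := abs_pos.2 hz1
  have hzabs : |z.im| ≤ ‖z‖ := Complex.abs_im_le_norm z
  have hzne : z ≠ 0 := fun h => hz1 (by rw [h]; rfl)
  rw [Ioc_inter_Ioi]
  set c : ℝ := 0 ⊔ a with hcdef
  have h0c : 0 ≤ c := le_max_left 0 a
  rcases le_or_gt 1 c with hc | hc
  · rw [Ioc_eq_empty (not_lt.2 hc), Measure.restrict_empty, integral_zero_measure, norm_zero]
    positivity
  · have heq : (∫ u in Ioc c 1, (u:ℂ) ^ (z-1)) = ∫ u in c..1, (u:ℂ)^(z-1) :=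
      (intervalIntegral.integral_of_le hc.le).symm
    have hre : (-1:ℝ) < (z-1).re := by
      simp only [Complex.sub_re, Complex.one_re]; linarith
    rw [heq, integral_cpow (Or.inl hre), sub_add_cancel]
    have h1 : ‖((1:ℝ):ℂ) ^ z‖ ≤ 1 := by
      rw [Complex.ofReal_one, Complex.one_cpow, norm_one]
    have hc' : ‖((c:ℝ):ℂ) ^ z‖ ≤ 1 := by
      rcases eq_or_lt_of_le h0c with h | h
      · rw [← h, Complex.ofReal_zero, Complex.zero_cpow hzne, norm_zero]; norm_num
      · rw [Complex.norm_cpow_eq_rpow_re_of_pos h]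
        exact Real.rpow_le_one h0c hc.le (le_of_lt hz0)
    have hnum : ‖((1:ℝ):ℂ) ^ z - ((c:ℝ):ℂ) ^ z‖ ≤ 2 := by
      calc ‖((1:ℝ):ℂ) ^ z - ((c:ℝ):ℂ) ^ z‖ ≤ ‖((1:ℝ):ℂ) ^ z‖ + ‖((c:ℝ):ℂ) ^ z‖ :=
            norm_sub_le _ _
        _ ≤ 2 := by linarith
    rw [norm_div]
    exact div_le_div₀ (by norm_num) hnum ht0 hzabs

lemma mellinBV_base_est_high (z : ℂ) (hz0 : z.re < 0) (hz1 : z.im ≠ 0) (a : ℝ) :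
    ‖∫ u in Ioi 1 ∩ Ioi a, (u:ℂ) ^ (z - 1)‖ ≤ 2 / |z.im| := by
  have ht0 : 0 < |z.im| := abs_pos.2 hz1
  have hzabs : |z.im| ≤ ‖z‖ := Complex.abs_im_le_norm z
  rw [Ioi_inter_Ioi]
  set c : ℝ := 1 ⊔ a with hcdef
  have h1c : 1 ≤ c := le_max_left 1 a
  have hc : (0:ℝ) < c := lt_of_lt_of_le one_pos h1c
  have hre : (z-1).re < -1 := by
    simp only [Complex.sub_re, Complex.one_re]; linarith
  rw [integral_Ioi_cpow_of_lt hre hc, sub_add_cancel]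
  rw [norm_div, norm_neg]
  have hc' : ‖((c:ℝ):ℂ) ^ z‖ ≤ 1 := by
    rw [Complex.norm_cpow_eq_rpow_re_of_pos hc]
    exact Real.rpow_le_one_of_one_le_of_nonpos h1c hz0.le
  exact div_le_div₀ (by norm_num) (by linarith) ht0 hzabs

end MellinBVAux

set_option maxHeartbeats 1000000 in
/-- Let `ε > 0` and let `g : (0,∞) → ℂ` be Lebesgue measurable, such that
`u ↦ g(u)·(u^(-ε) + u^(1+ε))` has bounded total variation on `(0,∞)` (condition `(A_ε)`).
Then the Mellin transform `ĝ(s) = ∫₀^∞ g(u) u^(s-1) du` converges absolutely for every `s`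
with `-ε < Re s < 1+ε`, is holomorphic on that open strip, and satisfies a uniform bound
`|ĝ(s)| ≤ C/|Im s|` there. -/
theorem mellin_of_boundedVariation (ε : ℝ) (hε : 0 < ε) (g : ℝ → ℂ)
    (hmeas : Measurable g)
    (hBV : BoundedVariationOn
      (fun u : ℝ => g u * ((u ^ (-ε) + u ^ (1 + ε) : ℝ) : ℂ)) (Ioi 0)) :
    (∀ s : ℂ, -ε < s.re → s.re < 1 + ε →
        IntegrableOn (fun u : ℝ => (u : ℂ) ^ (s - 1) • g u) (Ioi 0)) ∧
    DifferentiableOn ℂ (mellin g) {s : ℂ | -ε < s.re ∧ s.re < 1 + ε} ∧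
    ∃ C : ℝ, ∀ s : ℂ, -ε < s.re → s.re < 1 + ε → s.im ≠ 0 →
      ‖mellin g s‖ ≤ C / |s.im| := by
  set h : ℝ → ℂ := fun u : ℝ => g u * ((u ^ (-ε) + u ^ (1 + ε) : ℝ) : ℂ) with hhdef
  have hKpos : ∀ u : ℝ, 0 < u → (0:ℝ) < u ^ (-ε) + u ^ (1+ε) := by
    intro u hu
    have := Real.rpow_pos_of_pos hu (-ε)
    have := Real.rpow_pos_of_pos hu (1+ε)
    linarith
  set V : ℝ := (eVariationOn h (Ioi 0)).toReal with hVdef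
  have hV0 : 0 ≤ V := ENNReal.toReal_nonneg
  set M : ℝ := ‖h 1‖ + V with hMdef
  have hM0 : 0 ≤ M := by positivity
  have hhM : ∀ u ∈ Ioi (0:ℝ), ‖h u‖ ≤ M := by
    intro u hu
    have h1 : edist (h u) (h 1) ≤ eVariationOn h (Ioi 0) :=
      eVariationOn.edist_le h hu (mem_Ioi.2 one_pos)
    have h2 : dist (h u) (h 1) ≤ V := by
      rw [dist_edist]; exact ENNReal.toReal_mono hBV h1
    rw [dist_eq_norm] at h2
    calc ‖h u‖ = ‖h 1 + (h u - h 1)‖ := by congr 1; ring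
      _ ≤ ‖h 1‖ + ‖h u - h 1‖ := norm_add_le _ _
      _ ≤ M := by rw [hMdef]; linarith
  have hnormh : ∀ u : ℝ, 0 < u → ‖h u‖ = ‖g u‖ * (u ^ (-ε) + u ^ (1+ε)) := by
    intro u hu
    rw [hhdef]
    simp only [norm_mul, Complex.norm_real]
    rw [Real.norm_of_nonneg (hKpos u hu).le]
  have hge : ∀ u ∈ Ioi (0:ℝ), ‖g u‖ ≤ M * u ^ ε := by
    intro u hu
    have hu0 : 0 < u := mem_Ioi.1 hu
    have h1 : ‖g u‖ * u ^ (-ε) ≤ M := by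
      have h2 : ‖g u‖ * u ^ (-ε) ≤ ‖g u‖ * (u ^ (-ε) + u ^ (1+ε)) := by
        have := Real.rpow_pos_of_pos hu0 (1+ε)
        nlinarith [norm_nonneg (g u)]
      calc ‖g u‖ * u ^ (-ε) ≤ ‖h u‖ := by rw [hnormh u hu0]; exact h2
        _ ≤ M := hhM u hu
    have h3 : u ^ (-ε) * u ^ ε = 1 := by
      rw [← Real.rpow_add hu0, show -ε + ε = 0 by ring, Real.rpow_zero]
    calc ‖g u‖ = ‖g u‖ * u ^ (-ε) * u ^ ε := by rw [mul_assoc, h3, mul_one]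
      _ ≤ M * u ^ ε := mul_le_mul_of_nonneg_right h1 (Real.rpow_nonneg hu0.le ε)
  have hge' : ∀ u ∈ Ioi (0:ℝ), ‖g u‖ ≤ M * u ^ (-(1+ε)) := by
    intro u hu
    have hu0 : 0 < u := mem_Ioi.1 hu
    have h1 : ‖g u‖ * u ^ (1+ε) ≤ M := by
      have h2 : ‖g u‖ * u ^ (1+ε) ≤ ‖g u‖ * (u ^ (-ε) + u ^ (1+ε)) := by
        have := Real.rpow_pos_of_pos hu0 (-ε)
        nlinarith [norm_nonneg (g u)]
      calc ‖g u‖ * u ^ (1+ε) ≤ ‖h u‖ := by rw [hnormh u hu0]; exact h2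
        _ ≤ M := hhM u hu
    have h3 : u ^ (1+ε) * u ^ (-(1+ε)) = 1 := by
      rw [← Real.rpow_add hu0, show (1+ε) + -(1+ε) = 0 by ring, Real.rpow_zero]
    calc ‖g u‖ = ‖g u‖ * u ^ (1+ε) * u ^ (-(1+ε)) := by rw [mul_assoc, h3, mul_one]
      _ ≤ M * u ^ (-(1+ε)) := mul_le_mul_of_nonneg_right h1 (Real.rpow_nonneg hu0.le _)
  have hgM : ∀ u ∈ Ioi (0:ℝ), ‖g u‖ ≤ M := by
    intro u hu
    have hu0 : 0 < u := mem_Ioi.1 hu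
    rcases le_total u 1 with h | h
    · calc ‖g u‖ ≤ M * u ^ ε := hge u hu
        _ ≤ M * 1 := mul_le_mul_of_nonneg_left (Real.rpow_le_one hu0.le h hε.le) hM0
        _ = M := mul_one M
    · calc ‖g u‖ ≤ M * u ^ (-(1+ε)) := hge' u hu
        _ ≤ M * 1 := mul_le_mul_of_nonneg_left
            (Real.rpow_le_one_of_one_le_of_nonpos h (by linarith)) hM0
        _ = M := mul_one M
  have hloc : LocallyIntegrableOn g (Ioi 0) := by
    intro x hx
    have hx0 : 0 < x := mem_Ioi.1 hx
    refine ⟨Ioo (x/2) (x+1), ?_, ?_⟩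
    · exact mem_nhdsWithin_of_mem_nhds (Ioo_mem_nhds (by linarith) (by linarith))
    · refine Integrable.mono'
        ((integrableOn_const measure_Ioo_lt_top.ne) :
          IntegrableOn (fun _ : ℝ => M) (Ioo (x/2) (x+1)) volume)
        hmeas.aestronglyMeasurable.restrict ?_
      filter_upwards [ae_restrict_mem measurableSet_Ioo] with u hu
      exact hgM u (mem_Ioi.2 (by linarith [hu.1]))
  have htop : g =O[atTop] fun u : ℝ => u ^ (-(1+ε)) := by
    rw [Asymptotics.isBigO_iff]
    refine ⟨M, ?_⟩
    filter_upwards [eventually_gt_atTop 0] with u hu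
    rw [Real.norm_of_nonneg (Real.rpow_nonneg hu.le _)]
    exact hge' u (mem_Ioi.2 hu)
  have hbot : g =O[𝓝[>] (0:ℝ)] fun u : ℝ => u ^ (-(-ε)) := by
    rw [Asymptotics.isBigO_iff]
    refine ⟨M, ?_⟩
    filter_upwards [self_mem_nhdsWithin] with u hu
    rw [neg_neg, Real.norm_of_nonneg (Real.rpow_nonneg (le_of_lt (mem_Ioi.1 hu)) _)]
    exact hge u hu
  have hconv : ∀ s : ℂ, -ε < s.re → s.re < 1 + ε →
      IntegrableOn (fun u : ℝ => (u : ℂ) ^ (s - 1) • g u) (Ioi 0) := by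
    intro s hs1 hs2
    exact mellinConvergent_of_isBigO_rpow hloc htop hs2 hbot hs1
  refine ⟨hconv, ?_, ?_⟩
  · rintro s ⟨hs1, hs2⟩
    exact (mellin_differentiableAt_of_isBigO_rpow hloc htop hs2 hbot hs1).differentiableWithinAt
  -- Part 3
  -- decompose h into monotone pieces
  have hre_bv : BoundedVariationOn (fun u : ℝ => (h u).re) (Ioi 0) := by
    have := Complex.reCLM.lipschitz.comp_boundedVariationOn hBV
    simpa [Function.comp_def] using this
  have him_bv : BoundedVariationOn (fun u : ℝ => (h u).im) (Ioi 0) := by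
    have := Complex.imCLM.lipschitz.comp_boundedVariationOn hBV
    simpa [Function.comp_def] using this
  obtain ⟨p1, p2, B1, hp1m, hp2m, hB1, hp1b, hp2b, hredec⟩ :=
    mellinBV_real_bv_decomp (fun u => (h u).re) hre_bv M
      (fun u hu => le_trans (Complex.abs_re_le_norm (h u)) (hhM u hu))
  obtain ⟨p3, p4, B2, hp3m, hp4m, hB2, hp3b, hp4b, himdec⟩ :=
    mellinBV_real_bv_decomp (fun u => (h u).im) him_bv M
      (fun u hu => le_trans (Complex.abs_im_le_norm (h u)) (hhM u hu))
  set B : ℝ := B1 ⊔ B2 with hBdef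
  have hB0 : 0 ≤ B := le_trans hB1 (le_max_left _ _)
  have hb1 : ∀ u, 0 ≤ p1 u ∧ p1 u ≤ B :=
    fun u => ⟨(hp1b u).1, le_trans (hp1b u).2 (le_max_left _ _)⟩
  have hb2 : ∀ u, 0 ≤ p2 u ∧ p2 u ≤ B :=
    fun u => ⟨(hp2b u).1, le_trans (hp2b u).2 (le_max_left _ _)⟩
  have hb3 : ∀ u, 0 ≤ p3 u ∧ p3 u ≤ B :=
    fun u => ⟨(hp3b u).1, le_trans (hp3b u).2 (le_max_right _ _)⟩
  have hb4 : ∀ u, 0 ≤ p4 u ∧ p4 u ≤ B :=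
    fun u => ⟨(hp4b u).1, le_trans (hp4b u).2 (le_max_right _ _)⟩
  have hdecomp : ∀ u ∈ Ioi (0:ℝ), h u
      = ((p1 u - p2 u : ℝ) : ℂ) + Complex.I * ((p3 u - p4 u : ℝ) : ℂ) := by
    intro u hu
    apply Complex.ext
    · simp [← hredec u hu]
    · simp [← himdec u hu]
  -- the weight function
  set w : ℝ → ℝ := fun u => if 0 < u then 1 - (1 + u ^ (1+2*ε))⁻¹ else 0 with hwdef
  have hwvals : ∀ u : ℝ, 0 ≤ w u ∧ w u ≤ 1 := by
    intro u
    rw [hwdef]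
    by_cases hu : 0 < u
    · simp only [if_pos hu]
      have h1 : (0:ℝ) < u ^ (1+2*ε) := Real.rpow_pos_of_pos hu _
      have h2 : (0:ℝ) < 1 + u ^ (1+2*ε) := by linarith
      have h3 : (1 + u ^ (1+2*ε))⁻¹ ≤ 1 := by
        rw [inv_le_one_iff₀]; right; linarith
      have h4 : 0 < (1 + u ^ (1+2*ε))⁻¹ := by positivity
      constructor <;> linarith
    · simp [if_neg hu]
  have hwm : Monotone w := by
    intro a b hab
    rw [hwdef]
    by_cases ha : 0 < a
    · have hb : 0 < b := lt_of_lt_of_le ha hab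
      simp only [if_pos ha, if_pos hb]
      have h1 : a ^ (1+2*ε) ≤ b ^ (1+2*ε) := Real.rpow_le_rpow ha.le hab (by linarith)
      have h2 : (0:ℝ) < 1 + a ^ (1+2*ε) := by
        have := Real.rpow_pos_of_pos ha (1+2*ε); linarith
      have h3 : (1 + b ^ (1+2*ε))⁻¹ ≤ (1 + a ^ (1+2*ε))⁻¹ := by
        apply inv_anti₀ h2; linarith
      linarith
    · by_cases hb : 0 < b
      · simp only [if_neg ha, if_pos hb]
        have := (hwvals b)
        rw [hwdef] at this
        simp only [if_pos hb] at this
        exact this.1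
      · simp [if_neg ha, if_neg hb]
  have hwmeas : Measurable w := by
    rw [hwdef]
    apply Measurable.ite measurableSet_Ioi _ measurable_const
    apply Measurable.sub measurable_const
    apply Measurable.inv
    exact Measurable.add measurable_const (Real.continuous_rpow_const (by linarith)).measurable
  refine ⟨24 * B, ?_⟩
  intro s hs1 hs2 hsim
  have ht0 : 0 < |s.im| := abs_pos.2 hsim
  set z₁ : ℂ := s + (ε:ℂ) with hz1def
  set z₂ : ℂ := s - (ε:ℂ) - 1 with hz2def
  have hz1re : 0 < z₁.re := by
    rw [hz1def]; simp only [Complex.add_re, Complex.ofReal_re]; linarith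
  have hz1im : z₁.im = s.im := by
    rw [hz1def]; simp [Complex.add_im, Complex.ofReal_im]
  have hz2re : z₂.re < 0 := by
    rw [hz2def]
    simp only [Complex.sub_re, Complex.ofReal_re, Complex.one_re]
    linarith
  have hz2im : z₂.im = s.im := by
    rw [hz2def]; simp [Complex.sub_im, Complex.ofReal_im]
  -- integrability of the base powers
  have hint1 : IntegrableOn (fun u : ℝ => (u:ℂ) ^ (z₁ - 1)) (Ioc 0 1) := by
    have hres : (-1:ℝ) < (z₁ - 1).re := by
      simp only [Complex.sub_re, Complex.one_re]; linarith
    exact (intervalIntegral.intervalIntegrable_cpow' hres :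
      IntervalIntegrable _ volume 0 1).1
  have hint2 : IntegrableOn (fun u : ℝ => (u:ℂ) ^ (z₂ - 1)) (Ioi 1) := by
    have hres : (z₂ - 1).re < -1 := by
      simp only [Complex.sub_re, Complex.one_re]; linarith
    exact integrableOn_Ioi_cpow_of_lt hres one_pos
  set χ₁ : ℝ → ℂ := fun u => ((1 - w u : ℝ) : ℂ) * (u:ℂ) ^ (z₁ - 1) with hχ₁def
  set χ₂ : ℝ → ℂ := fun u => ((w u : ℝ) : ℂ) * (u:ℂ) ^ (z₂ - 1) with hχ₂def
  have hχ₁meas : Measurable χ₁ :=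
    (Complex.measurable_ofReal.comp (measurable_const.sub hwmeas)).mul
      (mellinBV_measurable_ofReal_cpow _)
  have hwnorm : ∀ u : ℝ, ‖((1 - w u : ℝ) : ℂ)‖ ≤ 1 := by
    intro u
    rw [Complex.norm_real, Real.norm_eq_abs, abs_le]
    have := hwvals u
    constructor <;> linarith [this.1, this.2]
  have hwnorm' : ∀ u : ℝ, ‖((w u : ℝ) : ℂ)‖ ≤ 1 := by
    intro u
    rw [Complex.norm_real, Real.norm_eq_abs, abs_le]
    have := hwvals u
    constructor <;> linarith [this.1, this.2]
  have hχ₁int : IntegrableOn χ₁ (Ioc 0 1) :=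
    Integrable.bdd_mul hint1
      (Complex.measurable_ofReal.comp (measurable_const.sub hwmeas)).aestronglyMeasurable
      (Eventually.of_forall hwnorm)
  have hχ₂int : IntegrableOn χ₂ (Ioi 1) :=
    Integrable.bdd_mul hint2
      (Complex.measurable_ofReal.comp hwmeas).aestronglyMeasurable (Eventually.of_forall hwnorm')
  have hbase1 : ∀ a : ℝ, ‖∫ u in Ioc 0 1 ∩ Ioi a, (u:ℂ) ^ (z₁ - 1)‖ ≤ 2 / |s.im| := by
    intro a
    have := mellinBV_base_est_low z₁ hz1re (by rw [hz1im]; exact hsim) a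
    rwa [hz1im] at this
  have hbase2 : ∀ a : ℝ, ‖∫ u in Ioi 1 ∩ Ioi a, (u:ℂ) ^ (z₂ - 1)‖ ≤ 2 / |s.im| := by
    intro a
    have := mellinBV_base_est_high z₂ hz2re (by rw [hz2im]; exact hsim) a
    rwa [hz2im] at this
  have hD0 : (0:ℝ) ≤ 2 / |s.im| := by positivity
  have htailw1 : ∀ a : ℝ, ‖∫ u in Ioc 0 1 ∩ Ioi a, w u • (u:ℂ) ^ (z₁ - 1)‖
      ≤ 1 * (2 / |s.im|) :=
    mellinBV_key_mono_tail (Ioc 0 1) measurableSet_Ioc Ioc_subset_Ioi_self _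
      (mellinBV_measurable_ofReal_cpow _) hint1 w hwm (fun u _ => (hwvals u).1) 1 zero_le_one
      (fun u _ => (hwvals u).2) _ hD0 hbase1
  have htailχ₁ : ∀ a : ℝ, ‖∫ u in Ioc 0 1 ∩ Ioi a, χ₁ u‖ ≤ 4 / |s.im| := by
    intro a
    have heq : (∫ u in Ioc 0 1 ∩ Ioi a, χ₁ u)
        = ∫ u in Ioc 0 1 ∩ Ioi a, ((u:ℂ) ^ (z₁ - 1) - w u • (u:ℂ) ^ (z₁ - 1)) := by
      apply integral_congr_ae
      refine Eventually.of_forall fun u => ?_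
      rw [hχ₁def]
      push_cast
      rw [Complex.real_smul]
      ring
    have hi1 : IntegrableOn (fun u : ℝ => (u:ℂ)^(z₁-1)) (Ioc 0 1 ∩ Ioi a) :=
      hint1.mono_set inter_subset_left
    have hi2 : IntegrableOn (fun u : ℝ => w u • (u:ℂ)^(z₁-1)) (Ioc 0 1 ∩ Ioi a) := by
      have hfe : (fun u : ℝ => w u • (u:ℂ)^(z₁-1)) = fun u => ((w u:ℝ):ℂ) * (u:ℂ)^(z₁-1) := by
        funext u; rw [Complex.real_smul]
      rw [hfe]
      exact Integrable.bdd_mul hi1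
        (Complex.measurable_ofReal.comp hwmeas).aestronglyMeasurable (Eventually.of_forall hwnorm')
    rw [heq, integral_sub hi1 hi2]
    calc ‖(∫ u in Ioc 0 1 ∩ Ioi a, (u:ℂ)^(z₁-1))
            - ∫ u in Ioc 0 1 ∩ Ioi a, w u • (u:ℂ)^(z₁-1)‖
        ≤ ‖∫ u in Ioc 0 1 ∩ Ioi a, (u:ℂ)^(z₁-1)‖
          + ‖∫ u in Ioc 0 1 ∩ Ioi a, w u • (u:ℂ)^(z₁-1)‖ := norm_sub_le _ _
      _ ≤ 2 / |s.im| + 1 * (2 / |s.im|) := add_le_add (hbase1 a) (htailw1 a)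
      _ = 4 / |s.im| := by ring
  have htailχ₂ : ∀ a : ℝ, ‖∫ u in Ioi 1 ∩ Ioi a, χ₂ u‖ ≤ 2 / |s.im| := by
    intro a
    have base := mellinBV_key_mono_tail (Ioi 1) measurableSet_Ioi
      (fun u hu => mem_Ioi.2 (lt_trans one_pos hu)) _
      (mellinBV_measurable_ofReal_cpow _) hint2 w hwm (fun u _ => (hwvals u).1) 1 zero_le_one
      (fun u _ => (hwvals u).2) _ hD0 hbase2 a
    have heq : (∫ u in Ioi 1 ∩ Ioi a, χ₂ u)
        = ∫ u in Ioi 1 ∩ Ioi a, w u • (u:ℂ) ^ (z₂ - 1) := by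
      apply integral_congr_ae
      refine Eventually.of_forall fun u => ?_
      simp only [hχ₂def, Complex.real_smul]
    rw [heq]
    calc ‖∫ u in Ioi 1 ∩ Ioi a, w u • (u:ℂ) ^ (z₂ - 1)‖ ≤ 1 * (2/|s.im|) := base
      _ = 2 / |s.im| := one_mul _
  have hD4 : (0:ℝ) ≤ 4 / |s.im| := by positivity
  have hterm1 : ∀ p : ℝ → ℝ, Monotone p → (∀ u, 0 ≤ p u ∧ p u ≤ B) →
      ‖∫ u in Ioc (0:ℝ) 1, p u • χ₁ u‖ ≤ B * (4 / |s.im|) := by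
    intro p hpm hpb
    exact mellinBV_key_mono (Ioc 0 1) measurableSet_Ioc Ioc_subset_Ioi_self χ₁ hχ₁meas hχ₁int
      p hpm (fun u _ => (hpb u).1) B hB0 (fun u _ => (hpb u).2) _ hD4 htailχ₁
  have hχ₂meas : Measurable χ₂ :=
    (Complex.measurable_ofReal.comp hwmeas).mul (mellinBV_measurable_ofReal_cpow _)
  have hterm2 : ∀ p : ℝ → ℝ, Monotone p → (∀ u, 0 ≤ p u ∧ p u ≤ B) →
      ‖∫ u in Ioi (1:ℝ), p u • χ₂ u‖ ≤ B * (2 / |s.im|) := by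
    intro p hpm hpb
    exact mellinBV_key_mono (Ioi 1) measurableSet_Ioi (fun u hu => mem_Ioi.2 (lt_trans one_pos hu))
      χ₂ hχ₂meas hχ₂int
      p hpm (fun u _ => (hpb u).1) B hB0 (fun u _ => (hpb u).2) _ hD0 htailχ₂
  -- pointwise identities
  have hid1 : ∀ u ∈ Ioc (0:ℝ) 1, (u:ℂ) ^ (s-1) • g u = h u * χ₁ u := by
    intro u hu
    have hu0 : 0 < u := hu.1
    have hune : (u:ℂ) ≠ 0 := Complex.ofReal_ne_zero.2 hu0.ne'
    have hdpos : (0:ℝ) < u ^ (1+2*ε) := Real.rpow_pos_of_pos hu0 _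
    have hden : (0:ℝ) < 1 + u ^ (1+2*ε) := by linarith
    have hwu : (1:ℝ) - w u = (1 + u ^ (1+2*ε))⁻¹ := by
      rw [hwdef]; simp only [if_pos hu0]; ring
    have hexp : u ^ (-ε) * u ^ (1+2*ε) = u ^ (1+ε) := by
      rw [← Real.rpow_add hu0]; congr 1; ring
    have hne : (1 + u ^ (1+2*ε)) ≠ 0 := hden.ne'
    have hreal : (u ^ (-ε) + u ^ (1+ε)) * (1 + u ^ (1+2*ε))⁻¹ = u ^ (-ε) := by
      have h9 : u ^ (-ε) + u ^ (1+ε) = u ^ (-ε) * (1 + u ^ (1+2*ε)) := by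
        rw [mul_add, mul_one, hexp]
      rw [h9, mul_assoc, mul_inv_cancel₀ hne, mul_one]
    have hcoe : ((u ^ (-ε) + u ^ (1+ε) : ℝ) : ℂ) * ((1 - w u : ℝ) : ℂ)
        = ((u ^ (-ε) : ℝ) : ℂ) := by
      rw [← Complex.ofReal_mul, hwu, hreal]
    have hc2 : ((u ^ (-ε) : ℝ) : ℂ) = (u:ℂ) ^ ((-ε : ℝ) : ℂ) :=
      Complex.ofReal_cpow hu0.le _
    have hc3 : (u:ℂ) ^ ((-ε : ℝ) : ℂ) * (u:ℂ) ^ (z₁ - 1) = (u:ℂ) ^ (s - 1) := by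
      rw [← Complex.cpow_add _ _ hune]
      congr 1
      rw [hz1def]; push_cast; ring
    rw [smul_eq_mul, hχ₁def, hhdef]
    calc (u:ℂ)^(s-1) * g u
        = g u * ((u:ℂ) ^ ((-ε:ℝ):ℂ) * (u:ℂ)^(z₁-1)) := by rw [hc3]; ring
      _ = g u * (((u ^ (-ε):ℝ):ℂ) * (u:ℂ)^(z₁-1)) := by rw [hc2]
      _ = g u * ((((u ^ (-ε) + u ^ (1+ε):ℝ):ℂ) * ((1 - w u:ℝ):ℂ)) * (u:ℂ)^(z₁-1)) := by
          rw [hcoe]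
      _ = g u * ((u ^ (-ε) + u ^ (1+ε):ℝ):ℂ) * (((1 - w u:ℝ):ℂ) * (u:ℂ)^(z₁-1)) := by
          ring
  have hid2 : ∀ u ∈ Ioi (1:ℝ), (u:ℂ) ^ (s-1) • g u = h u * χ₂ u := by
    intro u hu
    have hu0 : 0 < u := lt_trans one_pos hu
    have hune : (u:ℂ) ≠ 0 := Complex.ofReal_ne_zero.2 hu0.ne'
    have hdpos : (0:ℝ) < u ^ (1+2*ε) := Real.rpow_pos_of_pos hu0 _
    have hden : (0:ℝ) < 1 + u ^ (1+2*ε) := by linarith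
    have hne : (1 + u ^ (1+2*ε)) ≠ 0 := hden.ne'
    have hwu : w u = u ^ (1+2*ε) * (1 + u ^ (1+2*ε))⁻¹ := by
      rw [hwdef]; simp only [if_pos hu0]
      field_simp
      ring
    have hexp : u ^ (-ε) * u ^ (1+2*ε) = u ^ (1+ε) := by
      rw [← Real.rpow_add hu0]; congr 1; ring
    have hreal : (u ^ (-ε) + u ^ (1+ε)) * (u ^ (1+2*ε) * (1 + u ^ (1+2*ε))⁻¹)
        = u ^ (1+ε) := by
      have h9 : (u ^ (-ε) + u ^ (1+ε)) * u ^ (1+2*ε) = u ^ (1+ε) * (1 + u ^ (1+2*ε)) := by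
        rw [add_mul, hexp]; ring
      rw [← mul_assoc, h9, mul_assoc, mul_inv_cancel₀ hne, mul_one]
    have hcoe : ((u ^ (-ε) + u ^ (1+ε) : ℝ) : ℂ) * ((w u : ℝ) : ℂ)
        = ((u ^ (1+ε) : ℝ) : ℂ) := by
      rw [← Complex.ofReal_mul, hwu, hreal]
    have hc2 : ((u ^ (1+ε) : ℝ) : ℂ) = (u:ℂ) ^ ((1+ε : ℝ) : ℂ) :=
      Complex.ofReal_cpow hu0.le _
    have hc3 : (u:ℂ) ^ ((1+ε : ℝ) : ℂ) * (u:ℂ) ^ (z₂ - 1) = (u:ℂ) ^ (s - 1) := by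
      rw [← Complex.cpow_add _ _ hune]
      congr 1
      rw [hz2def]; push_cast; ring
    rw [smul_eq_mul, hχ₂def, hhdef]
    calc (u:ℂ)^(s-1) * g u
        = g u * ((u:ℂ) ^ ((1+ε:ℝ):ℂ) * (u:ℂ)^(z₂-1)) := by rw [hc3]; ring
      _ = g u * (((u ^ (1+ε):ℝ):ℂ) * (u:ℂ)^(z₂-1)) := by rw [hc2]
      _ = g u * ((((u ^ (-ε) + u ^ (1+ε):ℝ):ℂ) * ((w u:ℝ):ℂ)) * (u:ℂ)^(z₂-1)) := by
          rw [hcoe]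
      _ = g u * ((u ^ (-ε) + u ^ (1+ε):ℝ):ℂ) * (((w u:ℝ):ℂ) * (u:ℂ)^(z₂-1)) := by
          ring
  -- integrability of weighted pieces
  have hpint1 : ∀ p : ℝ → ℝ, Monotone p → (∀ u, 0 ≤ p u ∧ p u ≤ B) →
      IntegrableOn (fun u => p u • χ₁ u) (Ioc (0:ℝ) 1) := by
    intro p hpm hpb
    have hfe : (fun u => p u • χ₁ u) = fun u => ((p u : ℝ):ℂ) * χ₁ u := by
      funext u; rw [Complex.real_smul]
    rw [hfe]
    refine Integrable.bdd_mul (c := B) hχ₁int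
      (Complex.measurable_ofReal.comp hpm.measurable).aestronglyMeasurable (Eventually.of_forall fun u => ?_)
    rw [Complex.norm_real, Real.norm_eq_abs, _root_.abs_of_nonneg (hpb u).1]
    exact (hpb u).2
  have hpint2 : ∀ p : ℝ → ℝ, Monotone p → (∀ u, 0 ≤ p u ∧ p u ≤ B) →
      IntegrableOn (fun u => p u • χ₂ u) (Ioi (1:ℝ)) := by
    intro p hpm hpb
    have hfe : (fun u => p u • χ₂ u) = fun u => ((p u : ℝ):ℂ) * χ₂ u := by
      funext u; rw [Complex.real_smul]
    rw [hfe]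
    refine Integrable.bdd_mul (c := B) hχ₂int
      (Complex.measurable_ofReal.comp hpm.measurable).aestronglyMeasurable (Eventually.of_forall fun u => ?_)
    rw [Complex.norm_real, Real.norm_eq_abs, _root_.abs_of_nonneg (hpb u).1]
    exact (hpb u).2
  -- splitting the integrals
  have hsplit1 : (∫ u in Ioc (0:ℝ) 1, (u:ℂ)^(s-1) • g u)
      = ((∫ u in Ioc (0:ℝ) 1, p1 u • χ₁ u) - ∫ u in Ioc (0:ℝ) 1, p2 u • χ₁ u)
        + Complex.I • ((∫ u in Ioc (0:ℝ) 1, p3 u • χ₁ u)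
          - ∫ u in Ioc (0:ℝ) 1, p4 u • χ₁ u) := by
    have hstep : (∫ u in Ioc (0:ℝ) 1, (u:ℂ)^(s-1) • g u)
        = ∫ u in Ioc (0:ℝ) 1,
            ((p1 u • χ₁ u - p2 u • χ₁ u) + Complex.I • (p3 u • χ₁ u - p4 u • χ₁ u)) := by
      refine setIntegral_congr_fun measurableSet_Ioc fun u hu => ?_
      rw [hid1 u hu, hdecomp u (Ioc_subset_Ioi_self hu)]
      simp only [Complex.real_smul, smul_eq_mul]
      push_cast
      ring
    have hI12 : Integrable (fun u => p1 u • χ₁ u - p2 u • χ₁ u)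
        (volume.restrict (Ioc (0:ℝ) 1)) :=
      (hpint1 p1 hp1m hb1).sub (hpint1 p2 hp2m hb2)
    have hI34 : Integrable (fun u => Complex.I • (p3 u • χ₁ u - p4 u • χ₁ u))
        (volume.restrict (Ioc (0:ℝ) 1)) :=
      ((hpint1 p3 hp3m hb3).sub (hpint1 p4 hp4m hb4)).smul Complex.I
    rw [hstep, integral_add hI12 hI34,
      integral_sub (hpint1 p1 hp1m hb1) (hpint1 p2 hp2m hb2), integral_smul,
      integral_sub (hpint1 p3 hp3m hb3) (hpint1 p4 hp4m hb4)]
  have hsplit2 : (∫ u in Ioi (1:ℝ), (u:ℂ)^(s-1) • g u)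
      = ((∫ u in Ioi (1:ℝ), p1 u • χ₂ u) - ∫ u in Ioi (1:ℝ), p2 u • χ₂ u)
        + Complex.I • ((∫ u in Ioi (1:ℝ), p3 u • χ₂ u)
          - ∫ u in Ioi (1:ℝ), p4 u • χ₂ u) := by
    have hstep : (∫ u in Ioi (1:ℝ), (u:ℂ)^(s-1) • g u)
        = ∫ u in Ioi (1:ℝ),
            ((p1 u • χ₂ u - p2 u • χ₂ u) + Complex.I • (p3 u • χ₂ u - p4 u • χ₂ u)) := by
      refine setIntegral_congr_fun measurableSet_Ioi fun u hu => ?_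
      rw [hid2 u hu, hdecomp u (mem_Ioi.2 (lt_trans one_pos hu))]
      simp only [Complex.real_smul, smul_eq_mul]
      push_cast
      ring
    have hI12 : Integrable (fun u => p1 u • χ₂ u - p2 u • χ₂ u)
        (volume.restrict (Ioi (1:ℝ))) :=
      (hpint2 p1 hp1m hb1).sub (hpint2 p2 hp2m hb2)
    have hI34 : Integrable (fun u => Complex.I • (p3 u • χ₂ u - p4 u • χ₂ u))
        (volume.restrict (Ioi (1:ℝ))) :=
      ((hpint2 p3 hp3m hb3).sub (hpint2 p4 hp4m hb4)).smul Complex.I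
    rw [hstep, integral_add hI12 hI34,
      integral_sub (hpint2 p1 hp1m hb1) (hpint2 p2 hp2m hb2), integral_smul,
      integral_sub (hpint2 p3 hp3m hb3) (hpint2 p4 hp4m hb4)]
  have hnormI : ‖Complex.I‖ = 1 := by simp
  have hnormS1 : ‖∫ u in Ioc (0:ℝ) 1, (u:ℂ)^(s-1) • g u‖ ≤ 4 * (B * (4 / |s.im|)) := by
    rw [hsplit1]
    have e1 := hterm1 p1 hp1m hb1
    have e2 := hterm1 p2 hp2m hb2
    have e3 := hterm1 p3 hp3m hb3
    have e4 := hterm1 p4 hp4m hb4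
    have t1 := norm_add_le ((∫ u in Ioc (0:ℝ) 1, p1 u • χ₁ u) - ∫ u in Ioc (0:ℝ) 1, p2 u • χ₁ u)
      (Complex.I • ((∫ u in Ioc (0:ℝ) 1, p3 u • χ₁ u) - ∫ u in Ioc (0:ℝ) 1, p4 u • χ₁ u))
    have t2 := norm_sub_le (∫ u in Ioc (0:ℝ) 1, p1 u • χ₁ u) (∫ u in Ioc (0:ℝ) 1, p2 u • χ₁ u)
    have t3 := norm_sub_le (∫ u in Ioc (0:ℝ) 1, p3 u • χ₁ u) (∫ u in Ioc (0:ℝ) 1, p4 u • χ₁ u)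
    have t4 : ‖Complex.I • ((∫ u in Ioc (0:ℝ) 1, p3 u • χ₁ u)
        - ∫ u in Ioc (0:ℝ) 1, p4 u • χ₁ u)‖
        = ‖(∫ u in Ioc (0:ℝ) 1, p3 u • χ₁ u) - ∫ u in Ioc (0:ℝ) 1, p4 u • χ₁ u‖ := by
      rw [norm_smul, hnormI, one_mul]
    rw [t4] at t1
    linarith
  have hnormS2 : ‖∫ u in Ioi (1:ℝ), (u:ℂ)^(s-1) • g u‖ ≤ 4 * (B * (2 / |s.im|)) := by
    rw [hsplit2]
    have e1 := hterm2 p1 hp1m hb1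
    have e2 := hterm2 p2 hp2m hb2
    have e3 := hterm2 p3 hp3m hb3
    have e4 := hterm2 p4 hp4m hb4
    have t1 := norm_add_le ((∫ u in Ioi (1:ℝ), p1 u • χ₂ u) - ∫ u in Ioi (1:ℝ), p2 u • χ₂ u)
      (Complex.I • ((∫ u in Ioi (1:ℝ), p3 u • χ₂ u) - ∫ u in Ioi (1:ℝ), p4 u • χ₂ u))
    have t2 := norm_sub_le (∫ u in Ioi (1:ℝ), p1 u • χ₂ u) (∫ u in Ioi (1:ℝ), p2 u • χ₂ u)
    have t3 := norm_sub_le (∫ u in Ioi (1:ℝ), p3 u • χ₂ u) (∫ u in Ioi (1:ℝ), p4 u • χ₂ u)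
    have t4 : ‖Complex.I • ((∫ u in Ioi (1:ℝ), p3 u • χ₂ u)
        - ∫ u in Ioi (1:ℝ), p4 u • χ₂ u)‖
        = ‖(∫ u in Ioi (1:ℝ), p3 u • χ₂ u) - ∫ u in Ioi (1:ℝ), p4 u • χ₂ u‖ := by
      rw [norm_smul, hnormI, one_mul]
    rw [t4] at t1
    linarith
  have hIall := hconv s hs1 hs2
  have hIlow : IntegrableOn (fun u : ℝ => (u:ℂ)^(s-1) • g u) (Ioc 0 1) :=
    hIall.mono_set Ioc_subset_Ioi_self
  have hIhigh : IntegrableOn (fun u : ℝ => (u:ℂ)^(s-1) • g u) (Ioi 1) :=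
    hIall.mono_set (Ioi_subset_Ioi zero_le_one)
  have hmel : mellin g s = (∫ u in Ioc (0:ℝ) 1, (u:ℂ)^(s-1) • g u)
      + ∫ u in Ioi (1:ℝ), (u:ℂ)^(s-1) • g u := by
    have hdef : mellin g s = ∫ u in Ioi (0:ℝ), (u:ℂ)^(s-1) • g u := rfl
    rw [hdef, ← Ioc_union_Ioi_eq_Ioi (zero_le_one' ℝ),
      setIntegral_union (Ioc_disjoint_Ioi le_rfl) measurableSet_Ioi hIlow hIhigh]
  rw [hmel]
  have harith : 4 * (B * (4 / |s.im|)) + 4 * (B * (2 / |s.im|)) = 24 * B / |s.im| := by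
    field_simp
    ring
  calc ‖(∫ u in Ioc (0:ℝ) 1, (u:ℂ)^(s-1) • g u) + ∫ u in Ioi (1:ℝ), (u:ℂ)^(s-1) • g u‖
      ≤ ‖∫ u in Ioc (0:ℝ) 1, (u:ℂ)^(s-1) • g u‖ + ‖∫ u in Ioi (1:ℝ), (u:ℂ)^(s-1) • g u‖ :=
        norm_add_le _ _
    _ ≤ 4 * (B * (4 / |s.im|)) + 4 * (B * (2 / |s.im|)) := add_le_add hnormS1 hnormS2
    _ = 24 * B / |s.im| := harith
end

section
/- (Weil's theorem at a finite place) Let p be a prime and let μ be the Haar measure on the multiplicative group ℚ_p^× of the p-adic numbers, normalized so that the group of units {x : |x|_p = 1} has measure log(p). Then for every continuous compactly supported function g : (0,∞) → ℂ one has log(p)·∑_{k ≥ 1} g(p^k) + log(p)·∑_{k ≥ 1} p^{−k}·g(p^{−k}) = ∫_{{x ∈ ℚ_p^× : |x|_p ≠ 1}} g(1/|x|_p) / |1 − x|_p dμ(x). -/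
open Complex MeasureTheory Set

private lemma sphere_meas (p : ℕ) [Fact p.Prime] [MeasurableSpace ℚ_[p]] [BorelSpace ℚ_[p]]
    (r : ℝ) : MeasurableSet {x : ℚ_[p] | ‖x‖ = r} :=
  (isClosed_eq continuous_norm continuous_const).measurableSet

private lemma sphere_measure (p : ℕ) [Fact p.Prime] [MeasurableSpace ℚ_[p]] [BorelSpace ℚ_[p]]
    (μ : Measure ℚ_[p])
    (hinv : ∀ a : ℚ_[p], a ≠ 0 → μ.map (fun x => a * x) = μ)
    (hnorm : μ {x : ℚ_[p] | ‖x‖ = 1} = ENNReal.ofReal (Real.log p)) (n : ℤ) :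
    μ {x : ℚ_[p] | ‖x‖ = (p : ℝ) ^ n} = ENNReal.ofReal (Real.log p) := by
  have hp : (p : ℚ_[p]) ≠ 0 := by
    exact_mod_cast Nat.cast_ne_zero.2 (Fact.out : p.Prime).ne_zero
  have hp0 : (0 : ℝ) < p := by exact_mod_cast (Fact.out : p.Prime).pos
  set c : ℚ_[p] := (p : ℚ_[p]) ^ n with hc
  have hcne : c ≠ 0 := zpow_ne_zero _ hp
  have hcnorm : ‖c‖ = ((p : ℝ))⁻¹ ^ n := by
    rw [hc, norm_zpow, Padic.norm_p]
  have hpre : (fun x : ℚ_[p] => c * x) ⁻¹' {x : ℚ_[p] | ‖x‖ = 1}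
      = {x : ℚ_[p] | ‖x‖ = (p : ℝ) ^ n} := by
    ext x
    simp only [mem_preimage, mem_setOf_eq, norm_mul, hcnorm, inv_zpow]
    constructor
    · intro h
      have : ‖x‖ = ((p : ℝ) ^ n)⁻¹⁻¹ := by
        field_simp at h ⊢
        linarith [h]
      simpa using this
    · intro h
      rw [h]
      field_simp
  have := hinv c hcne
  calc μ {x : ℚ_[p] | ‖x‖ = (p : ℝ) ^ n}
      = μ ((fun x : ℚ_[p] => c * x) ⁻¹' {x : ℚ_[p] | ‖x‖ = 1}) := by rw [hpre]
    _ = (μ.map (fun x : ℚ_[p] => c * x)) {x : ℚ_[p] | ‖x‖ = 1} := by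
        rw [Measure.map_apply (measurable_const_mul c) (sphere_meas p 1)]
    _ = ENNReal.ofReal (Real.log p) := by rw [this, hnorm]

/-- **Weil's theorem at a finite place.**  Let `p` be a prime and let `μ` be the Haar
measure on the multiplicative group `ℚ_p^×`, normalized so that the units `{‖x‖ = 1}` get
measure `log p` (formalized as: a Borel measure on `ℚ_p` vanishing at `0`, invariant under
multiplication by every nonzero element, giving the units measure `log p`).  Then for every
continuous compactly supported `g : (0,∞) → ℂ`,
`log p · ∑_{k≥1} g(p^k) + log p · ∑_{k≥1} p^(-k) g(p^(-k))
  = ∫_{‖x‖ ≠ 1} g(1/‖x‖)/‖1-x‖ dμ(x)`. -/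
theorem weil_local_term_finite_place (p : ℕ) [Fact p.Prime]
    [MeasurableSpace ℚ_[p]] [BorelSpace ℚ_[p]]
    (μ : Measure ℚ_[p])
    (hzero : μ {0} = 0)
    (hinv : ∀ a : ℚ_[p], a ≠ 0 → μ.map (fun x => a * x) = μ)
    (hnorm : μ {x : ℚ_[p] | ‖x‖ = 1} = ENNReal.ofReal (Real.log p))
    (g : ℝ → ℂ) (hgc : Continuous g) (hgs : HasCompactSupport g)
    (hgsupp : tsupport g ⊆ Ioi 0) :
    (Real.log p : ℂ) * ∑' k : ℕ, g ((p : ℝ) ^ (k + 1))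
        + (Real.log p : ℂ) * ∑' k : ℕ, (((p : ℝ) ^ (k + 1) : ℝ)⁻¹ : ℂ) * g (((p : ℝ) ^ (k + 1))⁻¹)
      = ∫ x in {x : ℚ_[p] | ‖x‖ ≠ 1}, g ‖x‖⁻¹ / (‖1 - x‖ : ℂ) ∂μ := by
  have hp1 : (1 : ℝ) < p := by exact_mod_cast (Fact.out : p.Prime).one_lt
  have hp0 : (0 : ℝ) < p := lt_trans one_pos hp1
  -- choose N such that g vanishes outside [p^(-N), p^N]
  obtain ⟨N, hN⟩ : ∃ N : ℕ, ∀ y : ℝ, g y ≠ 0 →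
      (p : ℝ) ^ (-(N : ℤ)) ≤ y ∧ y ≤ (p : ℝ) ^ (N : ℤ) := by
    rcases eq_empty_or_nonempty (tsupport g) with hK | hK
    · exact ⟨0, fun y hy => absurd (subset_tsupport g hy) (by simp [hK])⟩
    · have hKc : IsCompact (tsupport g) := hgs
      have ha : sInf (tsupport g) ∈ tsupport g := hKc.sInf_mem hK
      have ha0 : (0 : ℝ) < sInf (tsupport g) := hgsupp ha
      obtain ⟨N1, hN1⟩ := pow_unbounded_of_one_lt (sSup (tsupport g)) hp1
      obtain ⟨N2, hN2⟩ := pow_unbounded_of_one_lt (sInf (tsupport g))⁻¹ hp1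
      refine ⟨max N1 N2, fun y hy => ?_⟩
      have hyK : y ∈ tsupport g := subset_tsupport g hy
      have h1 : sInf (tsupport g) ≤ y := csInf_le hKc.bddBelow hyK
      have h2 : y ≤ sSup (tsupport g) := le_csSup hKc.bddAbove hyK
      constructor
      · have : (sInf (tsupport g))⁻¹ < (p : ℝ) ^ (max N1 N2) :=
          lt_of_lt_of_le hN2 (pow_le_pow_right₀ hp1.le (le_max_right _ _))
        have := (inv_lt_comm₀ (by positivity) ha0).2 this
        calc (p : ℝ) ^ (-((max N1 N2 : ℕ) : ℤ)) = ((p : ℝ) ^ (max N1 N2 : ℕ))⁻¹ := by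
              rw [zpow_neg, zpow_natCast]
          _ ≤ sInf (tsupport g) := this.le
          _ ≤ y := h1
      · calc y ≤ sSup (tsupport g) := h2
          _ ≤ (p : ℝ) ^ (max N1 N2 : ℕ) :=
            (lt_of_lt_of_le hN1 (pow_le_pow_right₀ hp1.le (le_max_left _ _))).le
          _ = (p : ℝ) ^ ((max N1 N2 : ℕ) : ℤ) := by rw [zpow_natCast]
  set T : Set ℚ_[p] := {x : ℚ_[p] | ‖x‖ ≠ 1} with hTdef
  have hT : MeasurableSet T := (sphere_meas p 1).compl
  set S : ℤ → Set ℚ_[p] := fun n => {x : ℚ_[p] | ‖x‖ = (p : ℝ) ^ n} with hSdef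
  set F : ℚ_[p] → ℂ := fun x => g ‖x‖⁻¹ / (‖1 - x‖ : ℂ) with hFdef
  set cpos : ℕ → ℂ := fun k => ((((p : ℝ) ^ (k + 1) : ℝ) : ℂ))⁻¹ * g (((p : ℝ) ^ (k + 1))⁻¹)
    with hcpos
  set cneg : ℕ → ℂ := fun k => g ((p : ℝ) ^ (k + 1)) with hcneg
  -- the key pointwise identity
  have key : ∀ x : ℚ_[p], T.indicator F x =
      (∑ k ∈ Finset.range N, (S ((k : ℤ) + 1)).indicator (fun _ => cpos k) x)
      + (∑ k ∈ Finset.range N, (S (-((k : ℤ) + 1))).indicator (fun _ => cneg k) x) := by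
    intro x
    by_cases hx0 : x = 0
    · subst hx0
      have hg0 : g 0 = 0 := by
        by_contra h
        have h1 := (hN 0 h).1
        have h2 : (0 : ℝ) < (p : ℝ) ^ (-(N : ℤ)) := zpow_pos hp0 _
        linarith
      have h0T : (0 : ℚ_[p]) ∈ T := by simp [hTdef]
      have hz : ∀ m : ℤ, (0 : ℚ_[p]) ∉ S m := by
        intro m
        simp only [hSdef, mem_setOf_eq, norm_zero]
        exact (zpow_pos hp0 m).ne
      rw [indicator_of_mem h0T]
      have hF0 : F 0 = 0 := by simp [hFdef, hg0]
      rw [hF0]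
      rw [Finset.sum_eq_zero (fun k _ => indicator_of_notMem (hz _) _),
        Finset.sum_eq_zero (fun k _ => indicator_of_notMem (hz _) _), add_zero]
    · have hxnorm : ‖x‖ = (p : ℝ) ^ (-x.valuation) := Padic.norm_eq_zpow_neg_valuation hx0
      set v : ℤ := x.valuation with hv
      have hinj : Function.Injective (fun n : ℤ => (p : ℝ) ^ n) :=
        zpow_right_injective₀ hp0 hp1.ne'
      have hmem : ∀ m : ℤ, x ∈ S m ↔ m = -v := by
        intro m
        simp only [hSdef, mem_setOf_eq, hxnorm]
        exact ⟨fun h => (hinj h.symm), fun h => by rw [h]⟩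
      rcases lt_trichotomy v 0 with hv0 | hv0 | hv0
      · -- ‖x‖ = p^(-v) > 1
        obtain ⟨k0, hk0⟩ : ∃ k0 : ℕ, ((k0 : ℤ) + 1) = -v := ⟨(-v - 1).toNat, by omega⟩
        have hxgt : (1 : ℝ) < ‖x‖ := by
          rw [hxnorm, ← zpow_zero (p : ℝ)]
          exact zpow_lt_zpow_right₀ hp1 (by omega)
        have hxT : x ∈ T := by simpa [hTdef] using hxgt.ne'
        have h1x : ‖1 - x‖ = ‖x‖ := by
          have hne : ‖(1 : ℚ_[p])‖ ≠ ‖-x‖ := by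
            rw [norm_one, norm_neg]; exact hxgt.ne
          have := Padic.add_eq_max_of_ne hne
          rw [sub_eq_add_neg, this, norm_one, norm_neg]
          exact max_eq_right hxgt.le
        have hsum2 : (∑ k ∈ Finset.range N,
            (S (-((k : ℤ) + 1))).indicator (fun _ => cneg k) x) = 0 := by
          refine Finset.sum_eq_zero fun k _ => indicator_of_notMem ?_ _
          rw [hmem]; omega
        rw [indicator_of_mem hxT, hsum2, add_zero]
        by_cases hk0N : k0 < N
        · rw [Finset.sum_eq_single_of_mem k0 (Finset.mem_range.2 hk0N)
            (fun j _ hj => indicator_of_notMem (by rw [hmem]; omega) _)]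
          rw [indicator_of_mem ((hmem _).2 hk0)]
          have hpow : ((p : ℝ) ^ (k0 + 1)) = ‖x‖ := by
            rw [hxnorm, ← hk0, ← zpow_natCast]
            push_cast
            ring_nf
          simp only [hFdef, hcpos, h1x, hpow]
          rw [div_eq_inv_mul]
        · have hg0 : g ‖x‖⁻¹ = 0 := by
            by_contra h
            have h1 := (hN _ h).1
            rw [hxnorm, ← zpow_neg, neg_neg] at h1
            have : -(N : ℤ) ≤ v := (zpow_le_zpow_iff_right₀ hp1).1 h1
            omega
          rw [Finset.sum_eq_zero (fun j hj => indicator_of_notMem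
            (by rw [hmem]; have := Finset.mem_range.1 hj; omega) _)]
          simp [hFdef, hg0]
      · -- ‖x‖ = 1
        have hx1 : ‖x‖ = 1 := by rw [hxnorm, hv0]; norm_num
        have hxT : x ∉ T := by simp [hTdef, hx1]
        rw [indicator_of_notMem hxT]
        rw [Finset.sum_eq_zero (fun k _ => indicator_of_notMem (by rw [hmem]; omega) _),
          Finset.sum_eq_zero (fun k _ => indicator_of_notMem (by rw [hmem]; omega) _), add_zero]
      · -- ‖x‖ = p^(-v) < 1
        obtain ⟨k0, hk0⟩ : ∃ k0 : ℕ, ((k0 : ℤ) + 1) = v := ⟨(v - 1).toNat, by omega⟩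
        have hxlt : ‖x‖ < 1 := by
          rw [hxnorm, ← zpow_zero (p : ℝ)]
          exact zpow_lt_zpow_right₀ hp1 (by omega)
        have hxT : x ∈ T := by simpa [hTdef] using hxlt.ne
        have h1x : ‖1 - x‖ = 1 := by
          have hne : ‖(1 : ℚ_[p])‖ ≠ ‖-x‖ := by
            rw [norm_one, norm_neg]; exact hxlt.ne'
          have := Padic.add_eq_max_of_ne hne
          rw [sub_eq_add_neg, this, norm_one, norm_neg]
          exact max_eq_left hxlt.le
        have hsum1 : (∑ k ∈ Finset.range N,
            (S ((k : ℤ) + 1)).indicator (fun _ => cpos k) x) = 0 := by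
          refine Finset.sum_eq_zero fun k _ => indicator_of_notMem ?_ _
          rw [hmem]; omega
        rw [indicator_of_mem hxT, hsum1, zero_add]
        have hpow : ((p : ℝ) ^ (k0 + 1)) = ‖x‖⁻¹ := by
          rw [hxnorm, ← zpow_neg, neg_neg, ← hk0, ← zpow_natCast]
          push_cast
          ring_nf
        by_cases hk0N : k0 < N
        · rw [Finset.sum_eq_single_of_mem k0 (Finset.mem_range.2 hk0N)
            (fun j _ hj => indicator_of_notMem (by rw [hmem]; omega) _)]
          rw [indicator_of_mem ((hmem _).2 (by omega))]
          simp [hFdef, hcneg, h1x, hpow]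
        · have hg0 : g ‖x‖⁻¹ = 0 := by
            by_contra h
            have h1 := (hN _ h).2
            rw [hxnorm, ← zpow_neg, neg_neg] at h1
            have : v ≤ (N : ℤ) := (zpow_le_zpow_iff_right₀ hp1).1 h1
            omega
          rw [Finset.sum_eq_zero (fun j hj => indicator_of_notMem
            (by rw [hmem]; have := Finset.mem_range.1 hj; omega) _)]
          simp [hFdef, hg0]
  -- measure and integrability facts
  have hsphere : ∀ n : ℤ, μ (S n) = ENNReal.ofReal (Real.log p) :=
    sphere_measure p μ hinv hnorm
  have hSmeas : ∀ n : ℤ, MeasurableSet (S n) := fun n => sphere_meas p _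
  have hint : ∀ (n : ℤ) (c : ℂ), Integrable ((S n).indicator (fun _ => c)) μ := by
    intro n c
    rw [integrable_indicator_iff (hSmeas n)]
    exact integrableOn_const (by rw [hsphere]; exact ENNReal.ofReal_ne_top)
  have hIone : ∀ (n : ℤ) (c : ℂ),
      ∫ x, (S n).indicator (fun _ => c) x ∂μ = (Real.log p : ℂ) * c := by
    intro n c
    rw [integral_indicator_const c (hSmeas n), measureReal_def, hsphere,
      ENNReal.toReal_ofReal (Real.log_nonneg hp1.le), Complex.real_smul]
  have hRHS : ∫ x in T, F x ∂μ
      = (∑ k ∈ Finset.range N, (Real.log p : ℂ) * cpos k)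
        + (∑ k ∈ Finset.range N, (Real.log p : ℂ) * cneg k) := by
    rw [← integral_indicator hT]
    calc ∫ x, T.indicator F x ∂μ
        = ∫ x, ((∑ k ∈ Finset.range N, (S ((k : ℤ) + 1)).indicator (fun _ => cpos k) x)
            + (∑ k ∈ Finset.range N, (S (-((k : ℤ) + 1))).indicator (fun _ => cneg k) x)) ∂μ :=
          integral_congr_ae (Filter.Eventually.of_forall key)
      _ = (∫ x, ∑ k ∈ Finset.range N, (S ((k : ℤ) + 1)).indicator (fun _ => cpos k) x ∂μ)
          + ∫ x, ∑ k ∈ Finset.range N, (S (-((k : ℤ) + 1))).indicator (fun _ => cneg k) x ∂μ :=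
          integral_add (integrable_finset_sum _ fun k _ => hint _ _)
            (integrable_finset_sum _ fun k _ => hint _ _)
      _ = _ := by
          rw [integral_finset_sum _ fun k _ => hint _ _,
            integral_finset_sum _ fun k _ => hint _ _]
          simp only [hIone]
  -- tsums are finite sums
  have ht1 : ∑' k : ℕ, cneg k = ∑ k ∈ Finset.range N, cneg k := by
    refine tsum_eq_sum fun k hk => ?_
    have hkN : N ≤ k := by simpa using hk
    by_contra h
    have h2 := (hN _ (by simpa [hcneg] using h)).2
    rw [← zpow_natCast (p : ℝ) (k + 1)] at h2
    have : ((k : ℤ) + 1) ≤ (N : ℤ) := by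
      have := (zpow_le_zpow_iff_right₀ hp1).1 h2
      omega
    omega
  have ht2 : ∑' k : ℕ, cpos k = ∑ k ∈ Finset.range N, cpos k := by
    refine tsum_eq_sum fun k hk => ?_
    have hkN : N ≤ k := by simpa using hk
    have hg0 : g (((p : ℝ) ^ (k + 1))⁻¹) = 0 := by
      by_contra h
      have h1 := (hN _ h).1
      rw [← zpow_natCast (p : ℝ) (k + 1), ← zpow_neg] at h1
      have : -(N : ℤ) ≤ -((k : ℤ) + 1) := by
        have := (zpow_le_zpow_iff_right₀ hp1).1 h1
        omega
      omega
    simp [hcpos, hg0]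
  rw [ht1, ht2, hRHS, Finset.mul_sum, Finset.mul_sum, add_comm]
end

section
/- (Weil's theorem at the real place) For every smooth compactly supported function g : (0,∞) → ℂ, the following identity holds, all integrals being absolutely convergent: (log(π) + γ)·g(1) + ∫₁^∞ (g(u) + (1/u)·g(1/u)) du/u + ∫₁^∞ (g(u) − g(1))/(u² − 1) du/u + ∫₁^∞ ((1/u)·g(1/u) − g(1))/(u² − 1) du/u = (log(2π) + γ)·g(1) + ∫_{{x ∈ ℝ : x > 1/2}} (g(1/|x|) − g(1))/|1 − x| · dx/(2|x|) + ∫_{{x ∈ ℝ : x < 1/2, x ≠ 0}} g(1/|x|)/|1 − x| · dx/(2|x|). -/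
open scoped Real

open Complex MeasureTheory Set

section WeilHelpers

lemma wIntOn_of_cont_of_zero {F : ℝ → ℂ} {c d : ℝ} (hcd : c ≤ d)
    (hF : ContinuousOn F (Ici c)) (hz : ∀ u, d ≤ u → F u = 0) :
    IntegrableOn F (Ioi c) := by
  have h1 : IntegrableOn F (Ioc c d) :=
    ((hF.mono Icc_subset_Ici_self).integrableOn_Icc).mono_set Ioc_subset_Icc_self
  have h2 : IntegrableOn F (Ioi d) :=
    (integrableOn_zero).congr_fun (fun u hu => (hz u (le_of_lt hu)).symm) measurableSet_Ioi
  simpa [Ioc_union_Ioi_eq_Ioi hcd] using h1.union h2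

lemma wIntOn_of_bounded {F : ℝ → ℂ} {s : Set ℝ} (hs : MeasurableSet s) (hμ : volume s < ⊤)
    (hm : Measurable F) {C : ℝ} (hb : ∀ u ∈ s, ‖F u‖ ≤ C) :
    IntegrableOn F s := by
  apply Integrable.mono' (integrableOn_const (C := |C|) hμ.ne) hm.aestronglyMeasurable.restrict
  filter_upwards [ae_restrict_mem hs] with u hu using (hb u hu).trans (le_abs_self C)

lemma wR1 : (∫ u in Ioo (0:ℝ) 1, (2*(1+u))⁻¹) = Real.log 2 / 2 := by
  rw [← integral_Ioc_eq_integral_Ioo, ← intervalIntegral.integral_of_le zero_le_one]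
  have : ∀ u : ℝ, (2*(1+u))⁻¹ = (1/2) * ((fun x : ℝ => x⁻¹) (u + 1)) := by
    intro u; rw [mul_inv]; ring_nf
  simp_rw [this]
  rw [intervalIntegral.integral_const_mul,
    intervalIntegral.integral_comp_add_right (fun x : ℝ => x⁻¹) 1]
  norm_num
  ring

lemma wR2 : (∫ u in Ioo (1:ℝ) 2, (u+2)/(2*u*(u+1))) = (3 * Real.log 2 - Real.log 3) / 2 := by
  rw [← integral_Ioc_eq_integral_Ioo, ← intervalIntegral.integral_of_le one_le_two]
  have key : ∀ u ∈ uIcc (1:ℝ) 2, HasDerivAt (fun u : ℝ => Real.log u - Real.log (u+1) / 2)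
      ((u+2)/(2*u*(u+1))) u := by
    intro u hu
    rw [uIcc_of_le one_le_two] at hu
    have hu0 : (0:ℝ) < u := lt_of_lt_of_le one_pos hu.1
    have hu1 : (0:ℝ) < u + 1 := by linarith
    have h1 := Real.hasDerivAt_log hu0.ne'
    have h2 := (Real.hasDerivAt_log hu1.ne').comp u ((hasDerivAt_id u).add_const 1)
    refine (h1.fun_sub (h2.div_const 2)).congr_deriv ?_
    field_simp
    ring
  have hcont : IntervalIntegrable (fun u : ℝ => (u+2)/(2*u*(u+1))) volume 1 2 := by
    apply ContinuousOn.intervalIntegrable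
    apply ContinuousOn.div (by fun_prop)
    · fun_prop
    · intro u hu
      rw [uIcc_of_le one_le_two] at hu
      have : (0:ℝ) < u := lt_of_lt_of_le one_pos hu.1
      positivity
  rw [intervalIntegral.integral_eq_sub_of_hasDerivAt key hcont]
  norm_num
  ring

lemma wR3cw : ContinuousWithinAt (fun u : ℝ => Real.log (u^2-1)/2 - Real.log u) (Ici 2) 2 := by
  apply ContinuousAt.continuousWithinAt
  have h1 : ContinuousAt (fun u : ℝ => u^2 - 1) 2 := by fun_prop
  have h2 : ContinuousAt (fun u : ℝ => Real.log (u^2-1)) 2 :=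
    (Real.continuousAt_log (by norm_num)).comp h1
  exact (h2.div_const 2).sub (Real.continuousAt_log (by norm_num))

lemma wR3deriv : ∀ u ∈ Ioi (2:ℝ), HasDerivAt (fun u : ℝ => Real.log (u^2-1) / 2 - Real.log u)
    (((u^2-1)*u)⁻¹) u := by
  intro u hu
  have hu2 : (2:ℝ) < u := hu
  have hu0 : (0:ℝ) < u := by linarith
  have hq : (0:ℝ) < u^2 - 1 := by nlinarith
  have h1 := (Real.hasDerivAt_log hq.ne').comp u (((hasDerivAt_pow 2 u)).sub_const 1)
  have h2 := Real.hasDerivAt_log hu0.ne'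
  refine ((h1.div_const 2).fun_sub h2).congr_deriv ?_
  field_simp
  ring

lemma wR3lim : Filter.Tendsto (fun u : ℝ => Real.log (u^2-1) / 2 - Real.log u)
    Filter.atTop (nhds 0) := by
  have h1 : ∀ᶠ u in Filter.atTop, Real.log (1 - (u⁻¹)^2) / 2 = Real.log (u^2-1) / 2 - Real.log u := by
    filter_upwards [Filter.eventually_gt_atTop (1:ℝ)] with u hu
    have hu0 : (0:ℝ) < u := by linarith
    have hq : (0:ℝ) < u^2 - 1 := by nlinarith
    have : 1 - (u⁻¹)^2 = (u^2-1)/u^2 := by field_simp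
    rw [this, Real.log_div hq.ne' (by positivity), Real.log_pow]
    push_cast; ring
  apply Filter.Tendsto.congr' h1
  have h2 : Filter.Tendsto (fun u : ℝ => 1 - (u⁻¹)^2) Filter.atTop (nhds 1) := by
    have := tendsto_inv_atTop_zero (𝕜 := ℝ)
    have h3 : Filter.Tendsto (fun u : ℝ => (u⁻¹)^2) Filter.atTop (nhds 0) := by
      simpa using this.pow 2
    simpa using Filter.Tendsto.sub (tendsto_const_nhds (x := (1:ℝ))) h3
  have := (Real.continuousAt_log one_ne_zero).tendsto.comp h2
  simpa using this.div_const 2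

lemma wR3int : IntegrableOn (fun u : ℝ => ((u^2-1)*u)⁻¹) (Ioi (2:ℝ)) := by
  apply integrableOn_Ioi_deriv_of_nonneg wR3cw wR3deriv _ wR3lim
  intro u hu
  have hu2 : (2:ℝ) < u := hu
  have : (0:ℝ) < (u^2-1)*u := by nlinarith
  positivity

lemma wR3 : (∫ u in Ioi (2:ℝ), ((u^2-1)*u)⁻¹) = Real.log 2 - Real.log 3 / 2 := by
  rw [integral_Ioi_of_hasDerivAt_of_tendsto wR3cw wR3deriv wR3int wR3lim]
  norm_num


lemma wimg01 : (Inv.inv '' (Ioo (0:ℝ) 1)) = Ioi 1 := by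
  ext x; simp only [mem_image, mem_Ioo, mem_Ioi]
  constructor
  · rintro ⟨u, ⟨h0, h1⟩, rfl⟩; exact (one_lt_inv_iff₀).2 ⟨h0, h1⟩
  · intro hx; exact ⟨x⁻¹, ⟨by positivity, inv_lt_one_of_one_lt₀ hx⟩, inv_inv x⟩

lemma wimg12 : (Inv.inv '' (Ioo (1:ℝ) 2)) = Ioo (1/2) 1 := by
  have h : Inv.inv '' (Ioo (1:ℝ) 2) = Ioo (2:ℝ)⁻¹ (1:ℝ)⁻¹ := by
    ext x; simp only [mem_image, mem_Ioo]; constructor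
    · rintro ⟨u, ⟨h1, h2⟩, rfl⟩
      exact ⟨inv_strictAnti₀ (by linarith) h2, inv_strictAnti₀ one_pos h1⟩
    · rintro ⟨h1, h2⟩
      have hx : 0 < x := lt_trans (by norm_num) h1
      refine ⟨x⁻¹, ⟨?_, ?_⟩, inv_inv x⟩
      · have := inv_strictAnti₀ hx h2; rwa [inv_inv] at this
      · have := inv_strictAnti₀ (by norm_num : (0:ℝ) < 2⁻¹) h1; rwa [inv_inv] at this
  rw [h]; norm_num

lemma wimg2i : (Inv.inv '' (Ioi (2:ℝ))) = Ioo 0 (1/2) := by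
  have h : Inv.inv '' (Ioi (2:ℝ)) = Ioo 0 (2:ℝ)⁻¹ := by
    ext x; simp only [mem_image, mem_Ioi, mem_Ioo]; constructor
    · rintro ⟨u, h1, rfl⟩
      exact ⟨inv_pos.2 (by linarith), inv_strictAnti₀ (by norm_num) h1⟩
    · rintro ⟨h0, h2⟩
      refine ⟨x⁻¹, ?_, inv_inv x⟩
      have := inv_strictAnti₀ h0 h2; rwa [inv_inv] at this
  rw [h]; norm_num

lemma wimgneg : (fun u : ℝ => -u⁻¹) '' Ioi 0 = Iio 0 := by
  ext x; simp only [mem_image, mem_Ioi, mem_Iio]; constructor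
  · rintro ⟨u, h1, rfl⟩; simpa [neg_neg] using inv_pos.2 h1
  · intro hx
    exact ⟨-x⁻¹, by simpa [neg_pos] using inv_lt_zero.2 hx, by rw [inv_neg, inv_inv, neg_neg]⟩

lemma wsub_inv {s : Set ℝ} (hs : MeasurableSet s) (h0 : ∀ x ∈ s, x ≠ 0) (F : ℝ → ℂ) :
    ∫ x in Inv.inv '' s, F x = ∫ u in s, |(-(u^2)⁻¹)| • F u⁻¹ :=
  integral_image_eq_integral_abs_deriv_smul hs
    (fun x hx => (hasDerivAt_inv (h0 x hx)).hasDerivWithinAt) inv_injective.injOn F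

lemma wsubI_inv {s : Set ℝ} (hs : MeasurableSet s) (h0 : ∀ x ∈ s, x ≠ 0) (F : ℝ → ℂ) :
    IntegrableOn F (Inv.inv '' s) ↔ IntegrableOn (fun u => |(-(u^2)⁻¹)| • F u⁻¹) s :=
  integrableOn_image_iff_integrableOn_abs_deriv_smul hs
    (fun x hx => (hasDerivAt_inv (h0 x hx)).hasDerivWithinAt) inv_injective.injOn F

lemma wsub_neg_inv (F : ℝ → ℂ) :
    ∫ x in ((fun u : ℝ => -u⁻¹) '' Ioi 0), F x = ∫ u in Ioi (0:ℝ), |(u^2)⁻¹| • F (-u⁻¹) := by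
  apply integral_image_eq_integral_abs_deriv_smul measurableSet_Ioi
  · intro x hx
    simpa using ((hasDerivAt_inv (𝕜 := ℝ) (ne_of_gt (mem_Ioi.mp hx))).fun_neg).hasDerivWithinAt
  · exact (neg_injective.comp inv_injective).injOn

lemma wsubI_neg_inv (F : ℝ → ℂ) :
    IntegrableOn F ((fun u : ℝ => -u⁻¹) '' Ioi 0) ↔
      IntegrableOn (fun u => |(u^2)⁻¹| • F (-u⁻¹)) (Ioi (0:ℝ)) := by
  apply integrableOn_image_iff_integrableOn_abs_deriv_smul measurableSet_Ioi
  · intro x hx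
    simpa using ((hasDerivAt_inv (𝕜 := ℝ) (ne_of_gt (mem_Ioi.mp hx))).fun_neg).hasDerivWithinAt
  · exact (neg_injective.comp inv_injective).injOn

-- pointwise EqOn lemmas for the substituted integrands
lemma weqA (g : ℝ → ℂ) : EqOn
    (fun v => |(-(v^2)⁻¹)| • ((fun u : ℝ => ((u⁻¹:ℝ):ℂ) * g u⁻¹ / (u:ℂ)) v⁻¹))
    (fun v => g v) (Ioo (0:ℝ) 1) := by
  intro v hv
  have h0 : (0:ℝ) < v := hv.1
  have hv0 : (v:ℂ) ≠ 0 := Complex.ofReal_ne_zero.mpr (ne_of_gt h0)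
  have habs : |(-(v^2)⁻¹)| = (v^2)⁻¹ := by rw [abs_neg, abs_inv, abs_of_pos (by positivity)]
  simp only [inv_inv, habs, Complex.real_smul]
  push_cast
  field_simp

lemma weqB (g : ℝ → ℂ) : EqOn
    (fun v => |(-(v^2)⁻¹)| •
      ((fun u : ℝ => (((u⁻¹:ℝ):ℂ) * g u⁻¹ - g 1) / (((u^2 - 1) * u : ℝ) : ℂ)) v⁻¹))
    (fun v => ((v:ℂ) * ((v:ℂ) * g v - g 1)) / ((1 - v^2 : ℝ):ℂ)) (Ioo (0:ℝ) 1) := by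
  intro v hv
  obtain ⟨h0, h1⟩ := hv
  have hv0 : (v:ℂ) ≠ 0 := Complex.ofReal_ne_zero.mpr (ne_of_gt h0)
  have habs : |(-(v^2)⁻¹)| = (v^2)⁻¹ := by rw [abs_neg, abs_inv, abs_of_pos (by positivity)]
  have hd1 : ((1:ℂ) - (v:ℂ)^2) ≠ 0 := by
    have := Complex.ofReal_ne_zero.mpr (show (1 - v^2 : ℝ) ≠ 0 by nlinarith)
    push_cast at this; exact this
  have hd2 : ((v:ℂ)⁻¹)^2 - 1 ≠ 0 := by
    have := Complex.ofReal_ne_zero.mpr (show ((v⁻¹)^2 - 1 : ℝ) ≠ 0 by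
      have : 1 < v⁻¹ := (one_lt_inv_iff₀).2 ⟨h0, h1⟩
      nlinarith)
    push_cast at this; exact this
  simp only [inv_inv, habs, Complex.real_smul]
  push_cast
  field_simp

lemma weqC (g : ℝ → ℂ) : EqOn
    (fun v => |(-(v^2)⁻¹)| •
      ((fun x : ℝ => (g |x|⁻¹ - g 1) / ((|1 - x| * (2 * |x|) : ℝ) : ℂ)) v⁻¹))
    (fun v => (g v - g 1) / ((2*(1-v):ℝ):ℂ)) (Ioo (0:ℝ) 1) := by
  intro v hv
  obtain ⟨h0, h1⟩ := hv
  have hiv : (1:ℝ) < v⁻¹ := (one_lt_inv_iff₀).2 ⟨h0, h1⟩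
  have habs : |(-(v^2)⁻¹)| = (v^2)⁻¹ := by rw [abs_neg, abs_inv, abs_of_pos (by positivity)]
  have hx1 : |v⁻¹| = v⁻¹ := abs_of_pos (by positivity)
  have hx2 : |1 - v⁻¹| = v⁻¹ - 1 := by rw [abs_of_neg (by linarith)]; ring
  have hgv : |v⁻¹|⁻¹ = v := by rw [hx1, inv_inv]
  have hd1 : ((v:ℂ)⁻¹ - 1) ≠ 0 := by
    have := Complex.ofReal_ne_zero.mpr (show (v⁻¹ - 1 : ℝ) ≠ 0 by nlinarith)
    push_cast at this; exact this
  have hd2 : (1:ℂ) - (v:ℂ) ≠ 0 := by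
    have := Complex.ofReal_ne_zero.mpr (show (1 - v : ℝ) ≠ 0 by nlinarith)
    push_cast at this; exact this
  have hv0 : (v:ℂ) ≠ 0 := Complex.ofReal_ne_zero.mpr (ne_of_gt h0)
  simp only [habs, hx1, hx2, hgv, Complex.real_smul]
  push_cast
  field_simp

lemma weqD (g : ℝ → ℂ) : EqOn
    (fun v => |(-(v^2)⁻¹)| •
      ((fun x : ℝ => (g |x|⁻¹ - g 1) / ((|1 - x| * (2 * |x|) : ℝ) : ℂ)) v⁻¹))
    (fun v => (g v - g 1) / ((2*(v-1):ℝ):ℂ)) (Ioo (1:ℝ) 2) := by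
  intro v hv
  obtain ⟨h1, h2⟩ := hv
  have h0 : (0:ℝ) < v := by linarith
  have hiv : v⁻¹ < 1 := inv_lt_one_of_one_lt₀ h1
  have hiv0 : (0:ℝ) < v⁻¹ := by positivity
  have habs : |(-(v^2)⁻¹)| = (v^2)⁻¹ := by rw [abs_neg, abs_inv, abs_of_pos (by positivity)]
  have hx1 : |v⁻¹| = v⁻¹ := abs_of_pos hiv0
  have hx2 : |1 - v⁻¹| = 1 - v⁻¹ := abs_of_pos (by linarith)
  have hgv : |v⁻¹|⁻¹ = v := by rw [hx1, inv_inv]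
  have hd1 : ((1:ℂ) - (v:ℂ)⁻¹) ≠ 0 := by
    have := Complex.ofReal_ne_zero.mpr (show (1 - v⁻¹ : ℝ) ≠ 0 by nlinarith)
    push_cast at this; exact this
  have hd2 : ((v:ℂ) - 1) ≠ 0 := by
    have := Complex.ofReal_ne_zero.mpr (show (v - 1 : ℝ) ≠ 0 by nlinarith)
    push_cast at this; exact this
  have hv0 : (v:ℂ) ≠ 0 := Complex.ofReal_ne_zero.mpr (ne_of_gt h0)
  simp only [habs, hx1, hx2, hgv, Complex.real_smul]
  push_cast
  field_simp

lemma weqE (g : ℝ → ℂ) : EqOn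
    (fun v => |(-(v^2)⁻¹)| •
      ((fun x : ℝ => g |x|⁻¹ / ((|1 - x| * (2 * |x|) : ℝ) : ℂ)) v⁻¹))
    (fun v => g v / ((2*(v-1):ℝ):ℂ)) (Ioi (2:ℝ)) := by
  intro v hv
  have h1 : (2:ℝ) < v := hv
  have h0 : (0:ℝ) < v := by linarith
  have hiv : v⁻¹ < 1 := inv_lt_one_of_one_lt₀ (by linarith)
  have hiv0 : (0:ℝ) < v⁻¹ := by positivity
  have habs : |(-(v^2)⁻¹)| = (v^2)⁻¹ := by rw [abs_neg, abs_inv, abs_of_pos (by positivity)]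
  have hx1 : |v⁻¹| = v⁻¹ := abs_of_pos hiv0
  have hx2 : |1 - v⁻¹| = 1 - v⁻¹ := abs_of_pos (by linarith)
  have hgv : |v⁻¹|⁻¹ = v := by rw [hx1, inv_inv]
  have hd1 : ((1:ℂ) - (v:ℂ)⁻¹) ≠ 0 := by
    have := Complex.ofReal_ne_zero.mpr (show (1 - v⁻¹ : ℝ) ≠ 0 by nlinarith)
    push_cast at this; exact this
  have hd2 : ((v:ℂ) - 1) ≠ 0 := by
    have := Complex.ofReal_ne_zero.mpr (show (v - 1 : ℝ) ≠ 0 by nlinarith)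
    push_cast at this; exact this
  have hv0 : (v:ℂ) ≠ 0 := Complex.ofReal_ne_zero.mpr (ne_of_gt h0)
  simp only [habs, hx1, hx2, hgv, Complex.real_smul]
  push_cast
  field_simp

lemma weqF (g : ℝ → ℂ) : EqOn
    (fun v => |((v:ℝ)^2)⁻¹| •
      ((fun x : ℝ => g |x|⁻¹ / ((|1 - x| * (2 * |x|) : ℝ) : ℂ)) (-v⁻¹)))
    (fun v => g v / ((2*(1+v):ℝ):ℂ)) (Ioi (0:ℝ)) := by
  intro v hv
  have h0 : (0:ℝ) < v := hv
  have hiv0 : (0:ℝ) < v⁻¹ := by positivity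
  have habs : |((v:ℝ)^2)⁻¹| = (v^2)⁻¹ := by rw [abs_inv, abs_of_pos (by positivity)]
  have hx1 : |(-v⁻¹ : ℝ)| = v⁻¹ := by rw [abs_neg, abs_of_pos hiv0]
  have hx2 : |1 - (-v⁻¹)| = 1 + v⁻¹ := by rw [sub_neg_eq_add, abs_of_pos (by linarith)]
  have hgv : |(-v⁻¹ : ℝ)|⁻¹ = v := by rw [hx1, inv_inv]
  have hd1 : ((1:ℂ) + (v:ℂ)⁻¹) ≠ 0 := by
    have := Complex.ofReal_ne_zero.mpr (show (1 + v⁻¹ : ℝ) ≠ 0 by nlinarith)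
    push_cast at this; exact this
  have hd2 : ((1:ℂ) + (v:ℂ)) ≠ 0 := by
    have := Complex.ofReal_ne_zero.mpr (show (1 + v : ℝ) ≠ 0 by nlinarith)
    push_cast at this; exact this
  have hv0 : (v:ℂ) ≠ 0 := Complex.ofReal_ne_zero.mpr (ne_of_gt h0)
  have hD : ((v:ℂ)^2*2 + (v:ℂ)^3*2) ≠ 0 := by
    have : ((v:ℂ)^2*2 + (v:ℂ)^3*2) = 2*(v:ℂ)^2*(1+(v:ℂ)) := by ring
    rw [this]
    exact mul_ne_zero (mul_ne_zero two_ne_zero (pow_ne_zero 2 hv0)) hd2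
  simp only [habs, hx1, hx2, hgv, Complex.real_smul]
  push_cast
  field_simp
  rw [add_comm (1:ℂ) (v:ℂ), mul_div_cancel_right₀ _ (by rw [add_comm]; exact hd2)]

lemma wne0_Ioo01 : ∀ x ∈ Ioo (0:ℝ) 1, x ≠ 0 := fun x hx => ne_of_gt hx.1
lemma wne0_Ioo12 : ∀ x ∈ Ioo (1:ℝ) 2, x ≠ 0 := fun x hx => by have := hx.1; positivity
lemma wne0_Ioi2 : ∀ x ∈ Ioi (2:ℝ), x ≠ 0 := fun x hx => by have : (2:ℝ) < x := hx; positivity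

lemma wS1 (g : ℝ → ℂ) :
    (∫ u in Ioi (1:ℝ), ((u⁻¹:ℝ):ℂ) * g u⁻¹ / (u:ℂ)) = ∫ v in Ioo (0:ℝ) 1, g v := by
  rw [← wimg01, wsub_inv measurableSet_Ioo wne0_Ioo01]
  exact setIntegral_congr_fun measurableSet_Ioo (weqA g)

lemma wS2 (g : ℝ → ℂ) :
    (∫ u in Ioi (1:ℝ), (((u⁻¹:ℝ):ℂ) * g u⁻¹ - g 1) / (((u^2 - 1) * u : ℝ):ℂ))
      = ∫ v in Ioo (0:ℝ) 1, ((v:ℂ) * ((v:ℂ) * g v - g 1)) / ((1 - v^2 : ℝ):ℂ) := by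
  rw [← wimg01, wsub_inv measurableSet_Ioo wne0_Ioo01]
  exact setIntegral_congr_fun measurableSet_Ioo (weqB g)

lemma wS3a (g : ℝ → ℂ) :
    (∫ x in Ioi (1:ℝ), (g |x|⁻¹ - g 1) / ((|1 - x| * (2 * |x|) : ℝ):ℂ))
      = ∫ v in Ioo (0:ℝ) 1, (g v - g 1) / ((2*(1-v):ℝ):ℂ) := by
  rw [← wimg01, wsub_inv measurableSet_Ioo wne0_Ioo01]
  exact setIntegral_congr_fun measurableSet_Ioo (weqC g)

lemma wS3b (g : ℝ → ℂ) :
    (∫ x in Ioo (1/2:ℝ) 1, (g |x|⁻¹ - g 1) / ((|1 - x| * (2 * |x|) : ℝ):ℂ))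
      = ∫ v in Ioo (1:ℝ) 2, (g v - g 1) / ((2*(v-1):ℝ):ℂ) := by
  rw [← wimg12, wsub_inv measurableSet_Ioo wne0_Ioo12]
  exact setIntegral_congr_fun measurableSet_Ioo (weqD g)

lemma wS4a (g : ℝ → ℂ) :
    (∫ x in Ioo (0:ℝ) (1/2), g |x|⁻¹ / ((|1 - x| * (2 * |x|) : ℝ):ℂ))
      = ∫ v in Ioi (2:ℝ), g v / ((2*(v-1):ℝ):ℂ) := by
  rw [← wimg2i, wsub_inv measurableSet_Ioi wne0_Ioi2]
  exact setIntegral_congr_fun measurableSet_Ioi (weqE g)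

lemma wS4b (g : ℝ → ℂ) :
    (∫ x in Iio (0:ℝ), g |x|⁻¹ / ((|1 - x| * (2 * |x|) : ℝ):ℂ))
      = ∫ v in Ioi (0:ℝ), g v / ((2*(1+v):ℝ):ℂ) := by
  rw [← wimgneg, wsub_neg_inv]
  exact setIntegral_congr_fun measurableSet_Ioi (weqF g)

lemma wT3a (g : ℝ → ℂ) (h : IntegrableOn (fun v => (g v - g 1)/((2*(1-v):ℝ):ℂ)) (Ioo (0:ℝ) 1)) :
    IntegrableOn (fun x : ℝ => (g |x|⁻¹ - g 1) / ((|1 - x| * (2 * |x|) : ℝ):ℂ)) (Ioi (1:ℝ)) := by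
  rw [← wimg01, wsubI_inv measurableSet_Ioo wne0_Ioo01]
  exact h.congr_fun (weqC g).symm measurableSet_Ioo

lemma wT3b (g : ℝ → ℂ) (h : IntegrableOn (fun v => (g v - g 1)/((2*(v-1):ℝ):ℂ)) (Ioo (1:ℝ) 2)) :
    IntegrableOn (fun x : ℝ => (g |x|⁻¹ - g 1) / ((|1 - x| * (2 * |x|) : ℝ):ℂ)) (Ioo (1/2:ℝ) 1) := by
  rw [← wimg12, wsubI_inv measurableSet_Ioo wne0_Ioo12]
  exact h.congr_fun (weqD g).symm measurableSet_Ioo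

lemma wT4a (g : ℝ → ℂ) (h : IntegrableOn (fun v => g v/((2*(v-1):ℝ):ℂ)) (Ioi (2:ℝ))) :
    IntegrableOn (fun x : ℝ => g |x|⁻¹ / ((|1 - x| * (2 * |x|) : ℝ):ℂ)) (Ioo (0:ℝ) (1/2)) := by
  rw [← wimg2i, wsubI_inv measurableSet_Ioi wne0_Ioi2]
  exact h.congr_fun (weqE g).symm measurableSet_Ioi

lemma wT4b (g : ℝ → ℂ) (h : IntegrableOn (fun v => g v/((2*(1+v):ℝ):ℂ)) (Ioi (0:ℝ))) :
    IntegrableOn (fun x : ℝ => g |x|⁻¹ / ((|1 - x| * (2 * |x|) : ℝ):ℂ)) (Iio (0:ℝ)) := by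
  rw [← wimgneg, wsubI_neg_inv]
  exact h.congr_fun (weqF g).symm measurableSet_Ioi

lemma wG0 (g : ℝ → ℂ) (v : ℝ) (h0 : 0 < v) (h1 : v < 1) :
    g v + ((v:ℂ) * ((v:ℂ) * g v - g 1)) / ((1 - v^2 : ℝ):ℂ) - ((g v - g 1)/((2*(1-v) : ℝ):ℂ)
      + g v/((2*(1+v):ℝ):ℂ)) = g 1 * (((2*(1+v))⁻¹ : ℝ):ℂ) := by
  have e4 : (1 - (v:ℂ)) ≠ 0 := by
    have := Complex.ofReal_ne_zero.mpr (show (1-v:ℝ) ≠ 0 by nlinarith); push_cast at this; exact this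
  have e5 : (1 + (v:ℂ)) ≠ 0 := by
    have := Complex.ofReal_ne_zero.mpr (show (1+v:ℝ) ≠ 0 by nlinarith); push_cast at this; exact this
  have e1 : (1:ℂ) - (v:ℂ)^2 ≠ 0 := by
    have : (1:ℂ) - (v:ℂ)^2 = (1-(v:ℂ))*(1+(v:ℂ)) := by ring
    rw [this]; exact mul_ne_zero e4 e5
  push_cast
  field_simp
  ring

lemma wG1 (g : ℝ → ℂ) (u : ℝ) (h1 : 1 < u) (h2 : u < 2) :
    g u / (u:ℂ) + (g u - g 1)/(((u^2-1)*u:ℝ):ℂ) - ((g u - g 1)/((2*(u-1):ℝ):ℂ)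
      + g u/((2*(1+u):ℝ):ℂ)) = g 1 * (((u+2)/(2*u*(u+1)) : ℝ):ℂ) := by
  have h0 : (0:ℝ) < u := by linarith
  have e0 : (u:ℂ) ≠ 0 := Complex.ofReal_ne_zero.mpr (ne_of_gt h0)
  have e4 : ((u:ℂ) - 1) ≠ 0 := by
    have := Complex.ofReal_ne_zero.mpr (show (u-1:ℝ) ≠ 0 by nlinarith); push_cast at this; exact this
  have e5 : (1 + (u:ℂ)) ≠ 0 := by
    have := Complex.ofReal_ne_zero.mpr (show (1+u:ℝ) ≠ 0 by nlinarith); push_cast at this; exact this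
  have e5' : ((u:ℂ) + 1) ≠ 0 := by rw [add_comm]; exact e5
  have e1 : ((u:ℂ)^2 - 1) ≠ 0 := by
    have : ((u:ℂ)^2 - 1) = ((u:ℂ)-1)*((u:ℂ)+1) := by ring
    rw [this]; exact mul_ne_zero e4 e5'
  push_cast
  field_simp
  ring

lemma wG2 (g : ℝ → ℂ) (u : ℝ) (h2 : 2 < u) :
    g u / (u:ℂ) + (g u - g 1)/(((u^2-1)*u:ℝ):ℂ) - (g u/((2*(u-1):ℝ):ℂ)
      + g u/((2*(1+u):ℝ):ℂ)) = -(g 1 * ((((u^2-1)*u)⁻¹ : ℝ):ℂ)) := by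
  have h0 : (0:ℝ) < u := by linarith
  have e0 : (u:ℂ) ≠ 0 := Complex.ofReal_ne_zero.mpr (ne_of_gt h0)
  have e4 : ((u:ℂ) - 1) ≠ 0 := by
    have := Complex.ofReal_ne_zero.mpr (show (u-1:ℝ) ≠ 0 by nlinarith); push_cast at this; exact this
  have e5 : (1 + (u:ℂ)) ≠ 0 := by
    have := Complex.ofReal_ne_zero.mpr (show (1+u:ℝ) ≠ 0 by nlinarith); push_cast at this; exact this
  have e5' : ((u:ℂ) + 1) ≠ 0 := by rw [add_comm]; exact e5
  have e1 : ((u:ℂ)^2 - 1) ≠ 0 := by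
    have : ((u:ℂ)^2 - 1) = ((u:ℂ)-1)*((u:ℂ)+1) := by ring
    rw [this]; exact mul_ne_zero e4 e5'
  push_cast
  field_simp
  ring

end WeilHelpers
set_option maxHeartbeats 1000000 in
/-- **Weil's theorem at the real place.**  For every smooth compactly supported
`g : (0,∞) → ℂ`, the archimedean term
`W_r(g) = (log π + γ)·g(1) + ∫₁^∞ (g(u)+u⁻¹g(u⁻¹)) du/u + ∫₁^∞ (g(u)-g(1))/(u²-1) du/u
 + ∫₁^∞ (u⁻¹g(u⁻¹)-g(1))/(u²-1) du/u`
can be written as an integral over `ℝ^×` against the Haar measure `dx/(2|x|)`: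
`W_r(g) = (log 2π + γ)·g(1) + ∫_{x>1/2} (g(1/|x|)-g(1))/|1-x| dx/(2|x|)
 + ∫_{x<1/2, x≠0} g(1/|x|)/|1-x| dx/(2|x|)`. -/
theorem weil_local_term_real_place (g : ℝ → ℂ)
    (hgsm : ContDiff ℝ (⊤ : ℕ∞) g) (hgs : HasCompactSupport g) (hgsupp : tsupport g ⊆ Ioi 0) :
    ((Real.log π + Real.eulerMascheroniConstant : ℝ) : ℂ) * g 1
        + (∫ u in Ioi (1 : ℝ), (g u + ((u⁻¹ : ℝ) : ℂ) * g u⁻¹) / (u : ℂ))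
        + (∫ u in Ioi (1 : ℝ), (g u - g 1) / (((u ^ 2 - 1) * u : ℝ) : ℂ))
        + (∫ u in Ioi (1 : ℝ),
            (((u⁻¹ : ℝ) : ℂ) * g u⁻¹ - g 1) / (((u ^ 2 - 1) * u : ℝ) : ℂ))
      = ((Real.log (2 * π) + Real.eulerMascheroniConstant : ℝ) : ℂ) * g 1
          + (∫ x in Ioi (1 / 2 : ℝ), (g |x|⁻¹ - g 1) / ((|1 - x| * (2 * |x|) : ℝ) : ℂ))
          + ∫ x in {x : ℝ | x < 1 / 2 ∧ x ≠ 0},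
              g |x|⁻¹ / ((|1 - x| * (2 * |x|) : ℝ) : ℂ) := by
  have hc : Continuous g := hgsm.continuous
  obtain ⟨K, hKlip⟩ := hgsm.lipschitzWith_of_hasCompactSupport hgs (by simp)
  have hK0 : (0:ℝ) ≤ (K:ℝ) := K.coe_nonneg
  have hK : ∀ u : ℝ, ‖g u - g 1‖ ≤ (K:ℝ) * |u - 1| := by
    intro u
    have := hKlip.dist_le_mul u 1
    rwa [Complex.dist_eq, Real.dist_eq] at this
  obtain ⟨u₀, hM⟩ := hc.norm.exists_forall_ge_of_hasCompactSupport hgs.norm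
  obtain ⟨ε, hε0, hgε⟩ : ∃ ε : ℝ, 0 < ε ∧ ∀ u, u < ε → g u = 0 := by
    rcases eq_empty_or_nonempty (tsupport g) with h | h
    · exact ⟨1, one_pos, fun u _ => image_eq_zero_of_notMem_tsupport (by simp [h])⟩
    · exact ⟨sInf (tsupport g), hgsupp (hgs.isCompact.sInf_mem h), fun u hu =>
        image_eq_zero_of_notMem_tsupport fun hmem =>
          absurd (csInf_le hgs.isCompact.bddBelow hmem) (not_le.2 hu)⟩
  obtain ⟨b, hb⟩ := hgs.isCompact.bddAbove
  set D : ℝ := max (max b ε⁻¹) 2 + 1 with hDdef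
  have hD2 : (2:ℝ) ≤ D := by
    have := le_max_right (max b ε⁻¹) 2; simp only [hDdef]; linarith
  have hD1 : (1:ℝ) ≤ D := by linarith
  have hD0 : (0:ℝ) ≤ D := by linarith
  have hgD : ∀ u, D ≤ u → g u = 0 := by
    intro u hu
    apply image_eq_zero_of_notMem_tsupport
    intro hmem
    have h1 := hb hmem
    have h2 : b ≤ max (max b ε⁻¹) 2 := le_trans (le_max_left _ _) (le_max_left _ _)
    simp only [hDdef] at hu; linarith
  have hgDi : ∀ u : ℝ, D ≤ u → g u⁻¹ = 0 := by
    intro u hu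
    apply hgε
    have h2 : ε⁻¹ ≤ max (max b ε⁻¹) 2 := le_trans (le_max_right _ _) (le_max_left _ _)
    have h3 : ε⁻¹ < u := by simp only [hDdef] at hu; linarith
    exact inv_lt_of_inv_lt₀ hε0 h3
  have cR : Continuous (fun u : ℝ => (u:ℂ)) := Complex.continuous_ofReal
  -- integrability of the various pieces
  have i_f1 : IntegrableOn (fun u : ℝ => g u / (u:ℂ)) (Ioi 1) := by
    apply wIntOn_of_cont_of_zero hD1
    · exact ContinuousOn.div hc.continuousOn cR.continuousOn
        (fun u hu => Complex.ofReal_ne_zero.mpr (ne_of_gt (lt_of_lt_of_le one_pos hu)))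
    · intro u hu; rw [hgD u hu, zero_div]
  have i_f2 : IntegrableOn (fun u : ℝ => ((u⁻¹:ℝ):ℂ) * g u⁻¹ / (u:ℂ)) (Ioi 1) := by
    apply wIntOn_of_cont_of_zero hD1
    · have hinv : ContinuousOn (fun u : ℝ => u⁻¹) (Ici 1) :=
        continuousOn_id.inv₀ (fun u hu => ne_of_gt (lt_of_lt_of_le one_pos hu))
      exact (((cR.comp_continuousOn hinv).mul (hc.comp_continuousOn hinv)).div
        cR.continuousOn
        (fun u hu => Complex.ofReal_ne_zero.mpr (ne_of_gt (lt_of_lt_of_le one_pos hu))))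
    · intro u hu; rw [hgDi u hu, mul_zero, zero_div]
  have i_g0 : IntegrableOn g (Ioo (0:ℝ) 1) :=
    (hc.integrable_of_hasCompactSupport hgs).integrableOn
  have mF2 : Measurable (fun u : ℝ => (g u - g 1) / (((u ^ 2 - 1) * u : ℝ):ℂ)) :=
    (hc.measurable.sub measurable_const).div
      (Complex.measurable_ofReal.comp
        (((measurable_id.pow_const 2).sub measurable_const).mul measurable_id))
  have i_F2a : IntegrableOn (fun u : ℝ => (g u - g 1) / (((u ^ 2 - 1) * u : ℝ):ℂ)) (Ioc 1 2) := by
    apply wIntOn_of_bounded measurableSet_Ioc measure_Ioc_lt_top mF2 (C := (K:ℝ)/2)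
    intro u hu
    obtain ⟨h1, h2⟩ := hu
    have hd : (0:ℝ) < (u^2-1)*u := by nlinarith
    have hnum : ‖g u - g 1‖ ≤ (K:ℝ) * (u - 1) := by
      have := hK u; rwa [abs_of_pos (by linarith : (0:ℝ) < u - 1)] at this
    rw [norm_div, Complex.norm_real, Real.norm_eq_abs, abs_of_pos hd, div_le_iff₀ hd]
    nlinarith [norm_nonneg (g u - g 1),
      mul_nonneg (mul_nonneg hK0 (by linarith : (0:ℝ) ≤ u - 1))
        (by nlinarith : (0:ℝ) ≤ u*(u+1) - 2)]
  have i_F2b : IntegrableOn (fun u : ℝ => (g u - g 1) / (((u ^ 2 - 1) * u : ℝ):ℂ)) (Ioi 2) := by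
    have hmaj : IntegrableOn (fun u : ℝ => (‖g u₀‖ + ‖g 1‖) * ((u^2-1)*u)⁻¹) (Ioi 2) :=
      wR3int.const_mul _
    apply Integrable.mono' hmaj mF2.aestronglyMeasurable.restrict
    filter_upwards [ae_restrict_mem measurableSet_Ioi] with u hu
    have hu2 : (2:ℝ) < u := hu
    have hd : (0:ℝ) < (u^2-1)*u := by nlinarith
    rw [norm_div, Complex.norm_real, Real.norm_eq_abs, abs_of_pos hd, div_le_iff₀ hd]
    have he : (‖g u₀‖ + ‖g 1‖) * ((u^2-1)*u)⁻¹ * ((u^2-1)*u) = ‖g u₀‖ + ‖g 1‖ := by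
      field_simp
      exact mul_div_cancel_right₀ _ (by nlinarith)
    rw [he]
    exact (norm_sub_le _ _).trans (add_le_add_left (hM u) _)
  have mN3 : Measurable (fun v : ℝ => ((v:ℂ) * ((v:ℂ) * g v - g 1)) / ((1 - v^2 : ℝ):ℂ)) :=
    (Complex.measurable_ofReal.mul ((Complex.measurable_ofReal.mul hc.measurable).sub
      measurable_const)).div (Complex.measurable_ofReal.comp
        (measurable_const.sub (measurable_id.pow_const 2)))
  have i_N3 : IntegrableOn (fun v : ℝ => ((v:ℂ) * ((v:ℂ) * g v - g 1)) / ((1 - v^2 : ℝ):ℂ))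
      (Ioo 0 1) := by
    apply wIntOn_of_bounded measurableSet_Ioo measure_Ioo_lt_top mN3 (C := (K:ℝ) + ‖g 1‖)
    intro v hv
    obtain ⟨h0, h1⟩ := hv
    have hd : (0:ℝ) < 1 - v^2 := by nlinarith
    have hX : ‖(v:ℂ) * g v - g 1‖ ≤ ((K:ℝ) + ‖g 1‖) * (1 - v) := by
      have hsplit : (v:ℂ) * g v - g 1 = (v:ℂ) * (g v - g 1) + ((v:ℂ) - 1) * g 1 := by ring
      rw [hsplit]
      refine (norm_add_le _ _).trans ?_
      rw [norm_mul, norm_mul]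
      have hv1 : ‖(v:ℂ)‖ = v := by rw [Complex.norm_real, Real.norm_eq_abs, abs_of_pos h0]
      have hv2 : ‖(v:ℂ) - 1‖ = 1 - v := by
        rw [show ((v:ℂ) - 1) = (((v - 1 : ℝ)):ℂ) by push_cast; ring, Complex.norm_real,
          Real.norm_eq_abs, abs_of_neg (by linarith : v - 1 < 0)]
        ring
      have hgv : ‖g v - g 1‖ ≤ (K:ℝ) * (1 - v) := by
        have := hK v
        rwa [abs_of_neg (by linarith : v - 1 < 0), neg_sub] at this
      rw [hv1, hv2]
      nlinarith [norm_nonneg (g 1), norm_nonneg (g v - g 1)]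
    rw [norm_div, Complex.norm_real, Real.norm_eq_abs, abs_of_pos hd, div_le_iff₀ hd, norm_mul]
    have hv1 : ‖(v:ℂ)‖ = v := by rw [Complex.norm_real, Real.norm_eq_abs, abs_of_pos h0]
    rw [hv1]
    nlinarith [norm_nonneg ((v:ℂ) * g v - g 1), norm_nonneg (g 1),
      mul_nonneg (add_nonneg hK0 (norm_nonneg (g 1)))
        (mul_nonneg h0.le (by linarith : (0:ℝ) ≤ 1 - v))]
  have mK1 : Measurable (fun v : ℝ => (g v - g 1) / ((2*(1-v):ℝ):ℂ)) :=
    (hc.measurable.sub measurable_const).div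
      (Complex.measurable_ofReal.comp
        (measurable_const.mul (measurable_const.sub measurable_id)))
  have i_K1 : IntegrableOn (fun v : ℝ => (g v - g 1) / ((2*(1-v):ℝ):ℂ)) (Ioo 0 1) := by
    apply wIntOn_of_bounded measurableSet_Ioo measure_Ioo_lt_top mK1 (C := (K:ℝ)/2)
    intro v hv; obtain ⟨h0, h1⟩ := hv
    have hd : (0:ℝ) < 2*(1-v) := by linarith
    have hgv : ‖g v - g 1‖ ≤ (K:ℝ) * (1 - v) := by
      have := hK v; rwa [abs_of_neg (by linarith : v - 1 < 0), neg_sub] at this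
    rw [norm_div, Complex.norm_real, Real.norm_eq_abs, abs_of_pos hd, div_le_iff₀ hd]
    nlinarith
  have mK2 : Measurable (fun v : ℝ => (g v - g 1) / ((2*(v-1):ℝ):ℂ)) :=
    (hc.measurable.sub measurable_const).div
      (Complex.measurable_ofReal.comp
        (measurable_const.mul (measurable_id.sub measurable_const)))
  have i_K2 : IntegrableOn (fun v : ℝ => (g v - g 1) / ((2*(v-1):ℝ):ℂ)) (Ioo 1 2) := by
    apply wIntOn_of_bounded measurableSet_Ioo measure_Ioo_lt_top mK2 (C := (K:ℝ)/2)
    intro v hv; obtain ⟨h1, h2⟩ := hv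
    have hd : (0:ℝ) < 2*(v-1) := by linarith
    have hgv : ‖g v - g 1‖ ≤ (K:ℝ) * (v - 1) := by
      have := hK v; rwa [abs_of_pos (by linarith : (0:ℝ) < v - 1)] at this
    rw [norm_div, Complex.norm_real, Real.norm_eq_abs, abs_of_pos hd, div_le_iff₀ hd]
    nlinarith
  have i_K3 : IntegrableOn (fun v : ℝ => g v / ((2*(v-1):ℝ):ℂ)) (Ioi 2) := by
    apply wIntOn_of_cont_of_zero hD2
    · exact ContinuousOn.div hc.continuousOn
        ((cR.comp (by continuity)).continuousOn)
        (fun v hv => Complex.ofReal_ne_zero.mpr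
          (by have : (2:ℝ) ≤ v := hv; nlinarith))
    · intro u hu; rw [hgD u hu, zero_div]
  have i_K4 : IntegrableOn (fun v : ℝ => g v / ((2*(1+v):ℝ):ℂ)) (Ioi 0) := by
    apply wIntOn_of_cont_of_zero hD0
    · exact ContinuousOn.div hc.continuousOn
        ((cR.comp (by continuity)).continuousOn)
        (fun v hv => Complex.ofReal_ne_zero.mpr
          (by have : (0:ℝ) ≤ v := hv; nlinarith))
    · intro u hu; rw [hgD u hu, zero_div]
  -- split equalities
  have hL1 : (∫ u in Ioi (1:ℝ), (g u + ((u⁻¹:ℝ):ℂ) * g u⁻¹) / (u:ℂ))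
      = ((∫ u in Ioo (1:ℝ) 2, g u / (u:ℂ)) + (∫ u in Ioi (2:ℝ), g u / (u:ℂ)))
        + (∫ v in Ioo (0:ℝ) 1, g v) := by
    have e : (∫ u in Ioi (1:ℝ), (g u + ((u⁻¹:ℝ):ℂ) * g u⁻¹) / (u:ℂ))
        = ∫ u in Ioi (1:ℝ), (g u / (u:ℂ) + ((u⁻¹:ℝ):ℂ) * g u⁻¹ / (u:ℂ)) :=
      setIntegral_congr_fun measurableSet_Ioi (fun u _ => add_div _ _ _)
    rw [e, integral_add i_f1 i_f2, wS1]
    congr 1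
    rw [show Ioi (1:ℝ) = Ioc 1 2 ∪ Ioi 2 from (Ioc_union_Ioi_eq_Ioi one_le_two).symm,
      setIntegral_union (Ioc_disjoint_Ioi le_rfl) measurableSet_Ioi
        (i_f1.mono_set Ioc_subset_Ioi_self) (i_f1.mono_set (Ioi_subset_Ioi one_le_two)),
      integral_Ioc_eq_integral_Ioo]
  have hL2 : (∫ u in Ioi (1:ℝ), (g u - g 1) / (((u ^ 2 - 1) * u : ℝ):ℂ))
      = (∫ u in Ioo (1:ℝ) 2, (g u - g 1) / (((u ^ 2 - 1) * u : ℝ):ℂ))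
        + (∫ u in Ioi (2:ℝ), (g u - g 1) / (((u ^ 2 - 1) * u : ℝ):ℂ)) := by
    rw [show Ioi (1:ℝ) = Ioc 1 2 ∪ Ioi 2 from (Ioc_union_Ioi_eq_Ioi one_le_two).symm,
      setIntegral_union (Ioc_disjoint_Ioi le_rfl) measurableSet_Ioi i_F2a i_F2b,
      integral_Ioc_eq_integral_Ioo]
  have hL3 := wS2 g
  have hR1 : (∫ x in Ioi (1/2:ℝ), (g |x|⁻¹ - g 1) / ((|1 - x| * (2 * |x|) : ℝ):ℂ))
      = (∫ v in Ioo (1:ℝ) 2, (g v - g 1) / ((2*(v-1):ℝ):ℂ))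
        + (∫ v in Ioo (0:ℝ) 1, (g v - g 1) / ((2*(1-v):ℝ):ℂ)) := by
    rw [show Ioi (1/2:ℝ) = Ioc (1/2) 1 ∪ Ioi 1 from
        (Ioc_union_Ioi_eq_Ioi (by norm_num)).symm,
      setIntegral_union (Ioc_disjoint_Ioi le_rfl) measurableSet_Ioi
        ((wT3b g i_K2).congr_set_ae Ioo_ae_eq_Ioc.symm) (wT3a g i_K1),
      integral_Ioc_eq_integral_Ioo, wS3b, wS3a]
  have hsetR2 : {x:ℝ | x < 1/2 ∧ x ≠ 0} = Iio 0 ∪ Ioo 0 (1/2) := by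
    ext x
    simp only [mem_setOf_eq, mem_union, mem_Iio, mem_Ioo]
    constructor
    · rintro ⟨h1, h2⟩
      rcases lt_or_gt_of_ne h2 with h | h
      · exact Or.inl h
      · exact Or.inr ⟨h, h1⟩
    · rintro (h | ⟨h1, h2⟩)
      · exact ⟨by linarith, ne_of_lt h⟩
      · exact ⟨h2, ne_of_gt h1⟩
  have hR2 : (∫ x in {x:ℝ | x < 1/2 ∧ x ≠ 0}, g |x|⁻¹ / ((|1 - x| * (2 * |x|) : ℝ):ℂ))
      = (∫ v in Ioi (0:ℝ), g v / ((2*(1+v):ℝ):ℂ))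
        + (∫ v in Ioi (2:ℝ), g v / ((2*(v-1):ℝ):ℂ)) := by
    rw [hsetR2,
      setIntegral_union (by
        refine disjoint_left.mpr fun x hx hx2 => ?_
        exact absurd hx2.1 (not_lt.mpr (le_of_lt hx))) measurableSet_Ioo
        (wT4b g i_K4) (wT4a g i_K3),
      wS4b, wS4a]
  have hK4split : (∫ v in Ioi (0:ℝ), g v / ((2*(1+v):ℝ):ℂ))
      = (∫ v in Ioo (0:ℝ) 1, g v / ((2*(1+v):ℝ):ℂ))
        + ((∫ v in Ioo (1:ℝ) 2, g v / ((2*(1+v):ℝ):ℂ))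
          + (∫ v in Ioi (2:ℝ), g v / ((2*(1+v):ℝ):ℂ))) := by
    rw [show Ioi (0:ℝ) = Ioc 0 1 ∪ Ioi 1 from (Ioc_union_Ioi_eq_Ioi zero_le_one).symm,
      setIntegral_union (Ioc_disjoint_Ioi le_rfl) measurableSet_Ioi
        (i_K4.mono_set Ioc_subset_Ioi_self) (i_K4.mono_set (Ioi_subset_Ioi zero_le_one)),
      integral_Ioc_eq_integral_Ioo,
      show Ioi (1:ℝ) = Ioc 1 2 ∪ Ioi 2 from (Ioc_union_Ioi_eq_Ioi one_le_two).symm,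
      setIntegral_union (Ioc_disjoint_Ioi le_rfl) measurableSet_Ioi
        (i_K4.mono_set (Ioc_subset_Ioi_self.trans (Ioi_subset_Ioi zero_le_one)))
        (i_K4.mono_set (Ioi_subset_Ioi (by norm_num))),
      integral_Ioc_eq_integral_Ioo]
  -- integrability on sub-pieces
  have i_f1a : IntegrableOn (fun u : ℝ => g u / (u:ℂ)) (Ioo 1 2) :=
    i_f1.mono_set Ioo_subset_Ioi_self
  have i_f1b : IntegrableOn (fun u : ℝ => g u / (u:ℂ)) (Ioi 2) :=
    i_f1.mono_set (Ioi_subset_Ioi one_le_two)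
  have i_F2oo : IntegrableOn (fun u : ℝ => (g u - g 1) / (((u ^ 2 - 1) * u : ℝ):ℂ)) (Ioo 1 2) :=
    i_F2a.mono_set Ioo_subset_Ioc_self
  have i_K4a : IntegrableOn (fun v : ℝ => g v / ((2*(1+v):ℝ):ℂ)) (Ioo 0 1) :=
    i_K4.mono_set Ioo_subset_Ioi_self
  have i_K4b : IntegrableOn (fun v : ℝ => g v / ((2*(1+v):ℝ):ℂ)) (Ioo 1 2) :=
    i_K4.mono_set (Ioo_subset_Ioi_self.trans (Ioi_subset_Ioi zero_le_one))
  have i_K4c : IntegrableOn (fun v : ℝ => g v / ((2*(1+v):ℝ):ℂ)) (Ioi 2) :=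
    i_K4.mono_set (Ioi_subset_Ioi (by norm_num))
  -- the three grouped identities
  have E0 : (∫ v in Ioo (0:ℝ) 1, g v)
      + (∫ v in Ioo (0:ℝ) 1, ((v:ℂ) * ((v:ℂ) * g v - g 1)) / ((1 - v^2 : ℝ):ℂ))
      - ((∫ v in Ioo (0:ℝ) 1, (g v - g 1) / ((2*(1-v):ℝ):ℂ))
        + (∫ v in Ioo (0:ℝ) 1, g v / ((2*(1+v):ℝ):ℂ)))
      = g 1 * ((Real.log 2 / 2 : ℝ):ℂ) := by
    have A : IntegrableOn (fun v : ℝ => g v + ((v:ℂ) * ((v:ℂ) * g v - g 1)) / ((1 - v^2 : ℝ):ℂ))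
        (Ioo 0 1) := i_g0.add i_N3
    have B : IntegrableOn (fun v : ℝ => (g v - g 1) / ((2*(1-v):ℝ):ℂ) + g v / ((2*(1+v):ℝ):ℂ))
        (Ioo 0 1) := i_K1.add i_K4a
    rw [← integral_add i_g0 i_N3, ← integral_add i_K1 i_K4a,
      ← integral_sub A B,
      setIntegral_congr_fun measurableSet_Ioo
        (fun v hv => wG0 g v hv.1 hv.2),
      integral_const_mul]
    congr 1
    rw [show (∫ v in Ioo (0:ℝ) 1, (((2*(1+v))⁻¹ : ℝ):ℂ))
        = ((∫ v in Ioo (0:ℝ) 1, (2*(1+v))⁻¹ : ℝ):ℂ) from integral_ofReal, wR1]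
  have E1 : (∫ u in Ioo (1:ℝ) 2, g u / (u:ℂ))
      + (∫ u in Ioo (1:ℝ) 2, (g u - g 1) / (((u ^ 2 - 1) * u : ℝ):ℂ))
      - ((∫ v in Ioo (1:ℝ) 2, (g v - g 1) / ((2*(v-1):ℝ):ℂ))
        + (∫ v in Ioo (1:ℝ) 2, g v / ((2*(1+v):ℝ):ℂ)))
      = g 1 * (((3 * Real.log 2 - Real.log 3) / 2 : ℝ):ℂ) := by
    have A : IntegrableOn (fun u : ℝ => g u / (u:ℂ) + (g u - g 1) / (((u ^ 2 - 1) * u : ℝ):ℂ))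
        (Ioo 1 2) := i_f1a.add i_F2oo
    have B : IntegrableOn (fun v : ℝ => (g v - g 1) / ((2*(v-1):ℝ):ℂ) + g v / ((2*(1+v):ℝ):ℂ))
        (Ioo 1 2) := i_K2.add i_K4b
    rw [← integral_add i_f1a i_F2oo, ← integral_add i_K2 i_K4b,
      ← integral_sub A B,
      setIntegral_congr_fun measurableSet_Ioo
        (fun u hu => wG1 g u hu.1 hu.2),
      integral_const_mul]
    congr 1
    rw [show (∫ u in Ioo (1:ℝ) 2, (((u+2)/(2*u*(u+1)) : ℝ):ℂ))
        = ((∫ u in Ioo (1:ℝ) 2, (u+2)/(2*u*(u+1)) : ℝ):ℂ) from integral_ofReal, wR2]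
  have E2 : (∫ u in Ioi (2:ℝ), g u / (u:ℂ))
      + (∫ u in Ioi (2:ℝ), (g u - g 1) / (((u ^ 2 - 1) * u : ℝ):ℂ))
      - ((∫ v in Ioi (2:ℝ), g v / ((2*(v-1):ℝ):ℂ))
        + (∫ v in Ioi (2:ℝ), g v / ((2*(1+v):ℝ):ℂ)))
      = -(g 1 * ((Real.log 2 - Real.log 3 / 2 : ℝ):ℂ)) := by
    have A : IntegrableOn (fun u : ℝ => g u / (u:ℂ) + (g u - g 1) / (((u ^ 2 - 1) * u : ℝ):ℂ))
        (Ioi 2) := i_f1b.add i_F2b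
    have B : IntegrableOn (fun v : ℝ => g v / ((2*(v-1):ℝ):ℂ) + g v / ((2*(1+v):ℝ):ℂ))
        (Ioi 2) := i_K3.add i_K4c
    rw [← integral_add i_f1b i_F2b, ← integral_add i_K3 i_K4c,
      ← integral_sub A B,
      setIntegral_congr_fun measurableSet_Ioi
        (fun u hu => wG2 g u hu),
      integral_neg, integral_const_mul]
    congr 2
    rw [show (∫ u in Ioi (2:ℝ), ((((u^2-1)*u)⁻¹ : ℝ):ℂ))
        = ((∫ u in Ioi (2:ℝ), ((u^2-1)*u)⁻¹ : ℝ):ℂ) from integral_ofReal, wR3]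
  have hcast : ((Real.log (2 * π) + Real.eulerMascheroniConstant : ℝ) : ℂ) * g 1
      = ((Real.log π + Real.eulerMascheroniConstant : ℝ) : ℂ) * g 1
        + g 1 * ((Real.log 2 / 2 : ℝ):ℂ)
        + g 1 * (((3 * Real.log 2 - Real.log 3) / 2 : ℝ):ℂ)
        - g 1 * ((Real.log 2 - Real.log 3 / 2 : ℝ):ℂ) := by
    rw [Real.log_mul two_ne_zero Real.pi_ne_zero]
    push_cast
    ring
  rw [hL1, hL2, hL3, hR1, hR2, hK4split]
  linear_combination E0 + E1 + E2 - hcast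
end

section
/- (Dilation invariance of the conductor operator) For a Schwartz function φ : ℝ → ℂ define, for t ≠ 0, (Hφ)(t) = log|t|·φ(t) + 𝓕( ξ ↦ log|ξ|·(𝓕⁻¹φ)(ξ) )(t) (the function ξ ↦ log|ξ|·(𝓕⁻¹φ)(ξ) is integrable, so its Fourier transform is continuous). For u ≠ 0 let (D_uφ)(t) = |u|^{1/2}·φ(ut). Then H commutes with all dilations: for every u ≠ 0 and every t ≠ 0, (H(D_uφ))(t) = |u|^{1/2}·(Hφ)(ut). -/
open scoped Real FourierTransform
open Complex MeasureTheory Set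

noncomputable def conductorOp (f : ℝ → ℂ) (t : ℝ) : ℂ :=
  ((Real.log |t| : ℝ) : ℂ) * f t
    + 𝓕 (fun ξ : ℝ => ((Real.log |ξ| : ℝ) : ℂ) * 𝓕⁻ f ξ) t

/- ### Auxiliary lemmas -/

lemma abs_log_le_rpow {x : ℝ} (hx : 0 < x) (hx1 : x ≤ 1) :
    |Real.log x| ≤ 2 * x ^ (-(1/2) : ℝ) := by
  have hlog : Real.log x ≤ 0 := Real.log_nonpos hx.le hx1
  rw [abs_of_nonpos hlog]
  have h1 : Real.log (x ^ (-(1/2) : ℝ)) = (-(1/2) : ℝ) * Real.log x :=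
    Real.log_rpow hx _
  have hpos : 0 < x ^ (-(1/2) : ℝ) := Real.rpow_pos_of_pos hx _
  have h2 : Real.log (x ^ (-(1/2) : ℝ)) ≤ x ^ (-(1/2) : ℝ) :=
    (Real.log_le_sub_one_of_pos hpos).trans (by linarith)
  linarith

set_option maxHeartbeats 1000000 in
lemma integrableOn_abs_rpow_neg_half :
    IntegrableOn (fun x : ℝ => |x| ^ (-(1/2) : ℝ)) (Icc (-1 : ℝ) 1) volume := by
  have h1 : IntervalIntegrable (fun x : ℝ => x ^ (-(1/2) : ℝ)) volume 0 1 :=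
    intervalIntegral.intervalIntegrable_rpow' (by norm_num)
  have h1' : IntegrableOn (fun x : ℝ => x ^ (-(1/2) : ℝ)) (Ioc (0 : ℝ) 1) volume := by
    rwa [intervalIntegrable_iff_integrableOn_Ioc_of_le (by norm_num : (0:ℝ) ≤ 1)] at h1
  have hpos : IntegrableOn (fun x : ℝ => |x| ^ (-(1/2) : ℝ)) (Ioc (0 : ℝ) 1) volume := by
    apply h1'.congr_fun (fun x hx => ?_) measurableSet_Ioc
    rw [abs_of_pos hx.1]
  have h2 : IntervalIntegrable (fun x : ℝ => (-x) ^ (-(1/2) : ℝ)) volume (-0 : ℝ) (-1 : ℝ) :=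
    (IntervalIntegrable.iff_comp_neg enorm_ne_top).mp h1
  have h2' : IntegrableOn (fun x : ℝ => (-x) ^ (-(1/2) : ℝ)) (Ioc (-1 : ℝ) 0) volume := by
    rw [intervalIntegrable_iff] at h2
    simpa [uIoc_of_ge (by norm_num : (-1 : ℝ) ≤ -0)] using h2
  have hneg : IntegrableOn (fun x : ℝ => |x| ^ (-(1/2) : ℝ)) (Ioc (-1 : ℝ) 0) volume := by
    apply h2'.congr_fun (fun x hx => ?_) measurableSet_Ioc
    rw [abs_of_nonpos hx.2]
  have h3 := hneg.union hpos
  rw [Ioc_union_Ioc_eq_Ioc (by norm_num : (-1:ℝ) ≤ 0) (by norm_num : (0:ℝ) ≤ 1)] at h3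
  rwa [integrableOn_Icc_iff_integrableOn_Ioc]

lemma integrable_log_mul_schwartz (g : SchwartzMap ℝ ℂ) :
    Integrable (fun ξ : ℝ => ((Real.log |ξ| : ℝ) : ℂ) * g ξ) := by
  have hmeas : AEStronglyMeasurable (fun ξ : ℝ => ((Real.log |ξ| : ℝ) : ℂ) * g ξ) volume := by
    exact ((Complex.measurable_ofReal.comp
      (Real.measurable_log.comp measurable_abs)).mul g.continuous.measurable).aestronglyMeasurable
  obtain ⟨C, hCpos, hC⟩ := g.decay 0 0
  have hC' : ∀ x : ℝ, ‖g x‖ ≤ C := by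
    intro x
    have := hC x
    simpa [norm_iteratedFDeriv_zero] using this
  rw [← integrableOn_univ, ← Set.union_compl_self (Icc (-1 : ℝ) 1)]
  apply IntegrableOn.union
  · apply Integrable.mono' (integrableOn_abs_rpow_neg_half.const_mul (2 * C))
      hmeas.restrict
    filter_upwards [ae_restrict_mem measurableSet_Icc] with ξ hξ
    rw [norm_mul, Complex.norm_real, Real.norm_eq_abs]
    by_cases h0 : ξ = 0
    · simp only [h0, abs_zero, Real.log_zero, abs_zero, zero_mul]
      positivity
    · have habs : 0 < |ξ| := abs_pos.mpr h0
      have habs1 : |ξ| ≤ 1 := abs_le.mpr ⟨hξ.1, hξ.2⟩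
      calc |Real.log (|ξ|)| * ‖g ξ‖
          ≤ (2 * |ξ| ^ (-(1/2) : ℝ)) * C := by
            apply mul_le_mul (abs_log_le_rpow habs habs1) (hC' ξ) (norm_nonneg _)
            positivity
        _ = 2 * C * |ξ| ^ (-(1/2) : ℝ) := by ring
  · apply Integrable.mono' ((g.integrable_pow_mul volume 1).restrict) hmeas.restrict
    filter_upwards [ae_restrict_mem measurableSet_Icc.compl] with ξ hξ
    have h1 : 1 < |ξ| := by
      simp only [Set.mem_compl_iff, Set.mem_Icc, not_and_or, not_le] at hξ
      rcases hξ with h | h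
      · rw [abs_of_neg (by linarith)]; linarith
      · rw [abs_of_pos (by linarith)]; linarith
    have hlog : |Real.log (|ξ|)| ≤ |ξ| := by
      rw [_root_.abs_of_nonneg (Real.log_nonneg h1.le)]
      have := Real.log_le_sub_one_of_pos (by linarith : (0:ℝ) < |ξ|)
      linarith
    rw [norm_mul, Complex.norm_real, Real.norm_eq_abs]
    calc |Real.log (|ξ|)| * ‖g ξ‖ ≤ |ξ| * ‖g ξ‖ :=
          mul_le_mul_of_nonneg_right hlog (norm_nonneg _)
      _ = ‖ξ‖ ^ 1 * ‖g ξ‖ := by rw [pow_one, Real.norm_eq_abs]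

lemma fourier_scale (f : ℝ → ℂ) {u : ℝ} (hu : u ≠ 0) (w : ℝ) :
    𝓕 (fun x : ℝ => f (u * x)) w = |u|⁻¹ • 𝓕 f (w / u) := by
  rw [Real.fourier_real_eq, Real.fourier_real_eq]
  have h : ∀ v : ℝ, (𝐞 (-(v * w)) • f (u * v) : ℂ)
      = (fun x : ℝ => (𝐞 (-(x * (w / u))) • f x : ℂ)) (u * v) := by
    intro v
    simp only
    congr 2
    field_simp
  simp_rw [h]
  rw [Measure.integral_comp_mul_left (fun x : ℝ => (𝐞 (-(x * (w / u))) • f x : ℂ)) u, abs_inv]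

lemma fourier_const_mul' (c : ℂ) (f : ℝ → ℂ) (w : ℝ) :
    𝓕 (fun x : ℝ => c * f x) w = c * 𝓕 f w := by
  rw [Real.fourier_real_eq, Real.fourier_real_eq]
  simp_rw [Circle.smul_def, smul_eq_mul, mul_left_comm _ c]
  rw [integral_const_mul]

lemma fourier_congr_ae {f g : ℝ → ℂ} (h : f =ᵐ[volume] g) (w : ℝ) :
    𝓕 f w = 𝓕 g w := by
  rw [Real.fourier_real_eq, Real.fourier_real_eq]
  exact integral_congr_ae (h.mono fun x hx => by simp only [hx])

lemma fourierIntegral_add_of_integrable {f g : ℝ → ℂ} (hf : Integrable f) (hg : Integrable g) (w : ℝ) :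
    𝓕 (fun x : ℝ => f x + g x) w = 𝓕 f w + 𝓕 g w :=
  congrFun (VectorFourier.fourierIntegral_add Real.continuous_fourierChar
    continuous_inner hf hg) w

/-- **Dilation invariance of the conductor operator.**  For every Schwartz function `φ`,
the function `ξ ↦ log|ξ|·(𝓕⁻¹φ)(ξ)` is integrable, and for every `u ≠ 0` and `t ≠ 0`,
`(H(D_u φ))(t) = |u|^(1/2)·(Hφ)(ut)`, where `(D_u φ)(s) = |u|^(1/2)·φ(us)`. -/
theorem conductorOp_dilation_invariant (φ : SchwartzMap ℝ ℂ) :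
    Integrable (fun ξ : ℝ => ((Real.log |ξ| : ℝ) : ℂ) * 𝓕⁻ (⇑φ) ξ) ∧
    ∀ u : ℝ, u ≠ 0 → ∀ t : ℝ, t ≠ 0 →
      conductorOp (fun s : ℝ => ((|u| ^ (1 / 2 : ℝ) : ℝ) : ℂ) * φ (u * s)) t
        = ((|u| ^ (1 / 2 : ℝ) : ℝ) : ℂ) * conductorOp (⇑φ) (u * t) := by
  have hΨ : ⇑(𝓕⁻ φ : SchwartzMap ℝ ℂ) = 𝓕⁻ ⇑φ :=
    SchwartzMap.fourierInv_coe φ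
  set Ψ : SchwartzMap ℝ ℂ := (𝓕⁻ φ : SchwartzMap ℝ ℂ) with hΨdef
  have hint : Integrable (fun ξ : ℝ => ((Real.log |ξ| : ℝ) : ℂ) * 𝓕⁻ (⇑φ) ξ) := by
    have := integrable_log_mul_schwartz Ψ
    simpa [hΨ] using this
  refine ⟨hint, fun u hu t ht => ?_⟩
  set c : ℂ := ((|u| ^ (1 / 2 : ℝ) : ℝ) : ℂ) with hc
  have habs : (0 : ℝ) < |u| := abs_pos.mpr hu
  have habsC : ((|u| : ℝ) : ℂ) ≠ 0 := Complex.ofReal_ne_zero.mpr (ne_of_gt habs)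
  have hinv : 𝓕 (𝓕⁻ ⇑φ) = ⇑φ := by
    apply Continuous.fourier_fourierInv_eq φ.continuous φ.integrable
    have h : 𝓕 ⇑φ = ⇑(𝓕 φ : SchwartzMap ℝ ℂ) :=
      (SchwartzMap.fourier_coe φ).symm
    rw [h]
    exact SchwartzMap.integrable _
  have step1 : ∀ ξ : ℝ, 𝓕⁻ (fun s : ℝ => c * φ (u * s)) ξ
      = c * ((|u|⁻¹ : ℝ) : ℂ) * Ψ (ξ / u) := by
    intro ξ
    rw [Real.fourierInv_eq_fourier_neg]
    rw [show (fun s : ℝ => c * φ (u * s)) = fun s : ℝ => c * (fun x : ℝ => φ (u * x)) s from rfl]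
    rw [fourier_const_mul' c (fun x : ℝ => φ (u * x)) (-ξ)]
    rw [fourier_scale (⇑φ) hu (-ξ), neg_div, ← Real.fourierInv_eq_fourier_neg,
      ← hΨ]
    rw [Complex.real_smul]
    ring
  set g : ℝ → ℂ := fun η : ℝ => ((Real.log |u * η| : ℝ) : ℂ) * Ψ η with hg
  have e1 : (fun ξ : ℝ => ((Real.log |ξ| : ℝ) : ℂ) * 𝓕⁻ (fun s : ℝ => c * φ (u * s)) ξ)
      = fun ξ : ℝ => (c * ((|u|⁻¹ : ℝ) : ℂ)) * g (u⁻¹ * ξ) := by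
    funext ξ
    rw [step1 ξ, hg]
    simp only
    rw [show u * (u⁻¹ * ξ) = ξ by field_simp, show u⁻¹ * ξ = ξ / u from (div_eq_inv_mul ξ u).symm]
    ring
  have hgae : g =ᵐ[volume] fun η : ℝ =>
      ((Real.log |u| : ℝ) : ℂ) * Ψ η + ((Real.log |η| : ℝ) : ℂ) * Ψ η := by
    filter_upwards [compl_mem_ae_iff.mpr (measure_singleton (0 : ℝ))] with η hη
    have hη0 : η ≠ 0 := by simpa using hη
    rw [hg]
    simp only
    rw [abs_mul, Real.log_mul (abs_ne_zero.mpr hu) (abs_ne_zero.mpr hη0)]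
    push_cast
    ring
  have hΨint : Integrable (fun η : ℝ => ((Real.log |u| : ℝ) : ℂ) * Ψ η) :=
    (SchwartzMap.integrable Ψ).const_mul _
  have hLΨint : Integrable (fun η : ℝ => ((Real.log |η| : ℝ) : ℂ) * Ψ η) :=
    integrable_log_mul_schwartz Ψ
  have key : 𝓕 (fun ξ : ℝ => ((Real.log |ξ| : ℝ) : ℂ) * 𝓕⁻ (fun s : ℝ => c * φ (u * s)) ξ) t
      = c * (((Real.log |u| : ℝ) : ℂ) * φ (u * t)
          + 𝓕 (fun ξ : ℝ => ((Real.log |ξ| : ℝ) : ℂ) * 𝓕⁻ (⇑φ) ξ) (u * t)) := by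
    rw [e1]
    rw [fourier_const_mul' (c * ((|u|⁻¹ : ℝ) : ℂ)) (fun ξ : ℝ => g (u⁻¹ * ξ)) t]
    rw [fourier_scale g (inv_ne_zero hu) t]
    rw [abs_inv, inv_inv, show t / u⁻¹ = u * t by rw [div_eq_mul_inv, inv_inv, mul_comm]]
    rw [fourier_congr_ae hgae]
    rw [fourierIntegral_add_of_integrable hΨint hLΨint]
    rw [fourier_const_mul' (((Real.log |u| : ℝ) : ℂ)) (⇑Ψ)]
    rw [hΨ]
    rw [show 𝓕 (𝓕⁻ ⇑φ) (u * t) = φ (u * t) from congrFun hinv (u * t)]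
    rw [Complex.real_smul]
    rw [show ((|u|⁻¹ : ℝ) : ℂ) = ((|u| : ℝ) : ℂ)⁻¹ by push_cast; ring]
    field_simp
  have hlog : ((Real.log |u * t| : ℝ) : ℂ)
      = ((Real.log |u| : ℝ) : ℂ) + ((Real.log |t| : ℝ) : ℂ) := by
    rw [abs_mul, Real.log_mul (abs_ne_zero.mpr hu) (abs_ne_zero.mpr ht)]
    push_cast
    ring
  simp only [conductorOp]
  rw [key, hlog]
  ring
end
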